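/- arXiv:2505.18439 — 8 statements merged into one kernel-verified Lean document; each statement's English description precedes it below -/
import Mathlib

section
/- g₁′(r) ≤ 0 for all r ∈ (0,R); that is, the radial part of the first Dirichlet eigenfunction of a geodesic ball in 𝕂ℍⁿ is nonincreasing. -/
/-!
With the weight `w = sinh ^ (kn - 1) * cosh ^ (k - 1)` one has `w' = H w`, so the radial
equation takes the Sturm–Liouville form `(w g₁')' = -λ₁ w g₁`, which is negative on `(0, R)`.
Since `w` is bounded near `0` and `g₁' → 0`, the flux `w g₁'` vanishes at `0⁺`; being strictly
decreasing it is negative on `(0, R)`, and so is `g₁'`.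
-/

open Real Set Filter Topology

theorem hasDerivAt_sinh_pow_mul_cosh_pow (a b : ℕ) {r : ℝ} (hr : r ≠ 0) :
    HasDerivAt (fun x => sinh x ^ a * cosh x ^ b)
      ((a * (cosh r / sinh r) + b * tanh r) * (sinh r ^ a * cosh r ^ b)) r := by
  have hs : sinh r ≠ 0 := sinh_ne_zero.mpr hr
  have hc : cosh r ≠ 0 := (cosh_pos r).ne'
  refine (((hasDerivAt_sinh r).pow a).mul ((hasDerivAt_cosh r).pow b)).congr_deriv ?_
  rw [tanh_eq_sinh_div_cosh]
  cases a <;> cases b <;>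
    simp only [Pi.pow_apply, Nat.cast_zero, Nat.cast_succ, Nat.add_sub_cancel] <;>
    field_simp <;> ring

theorem neg_of_hasDerivAt_neg_of_tendsto_zero {f f' : ℝ → ℝ} {a b : ℝ}
    (hf : ∀ x ∈ Ioo a b, HasDerivAt f (f' x) x) (hf' : ∀ x ∈ Ioo a b, f' x < 0)
    (hlim : Tendsto f (𝓝[>] a) (𝓝 0)) :
    ∀ x ∈ Ioo a b, f x < 0 := by
  have hanti : StrictAntiOn f (Ioo a b) := by
    refine strictAntiOn_of_deriv_neg (convex_Ioo a b)
      (fun x hx => (hf x hx).continuousAt.continuousWithinAt) fun x hx => ?_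
    rw [interior_Ioo] at hx
    exact (hf x hx).deriv ▸ hf' x hx
  have hnonpos : ∀ x ∈ Ioo a b, f x ≤ 0 := fun x hx =>
    ge_of_tendsto hlim <| by
      filter_upwards [Ioo_mem_nhdsGT hx.1] with s hs
      exact hanti.le_iff_ge hx ⟨hs.1, hs.2.trans hx.2⟩ |>.mpr hs.2.le
  intro x hx
  obtain ⟨s, hs⟩ := exists_between hx.1
  exact (hanti ⟨hs.1, hs.2.trans hx.2⟩ hx hs.2).trans_le (hnonpos s ⟨hs.1, hs.2.trans hx.2⟩)

theorem deriv_neg_of_sturmLiouville {H w g g' g'' : ℝ → ℝ} {R lam : ℝ} (hlam : 0 < lam)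
    (hw : ∀ r ∈ Ioo 0 R, HasDerivAt w (H r * w r) r) (hwpos : ∀ r ∈ Ioo 0 R, 0 < w r)
    (hw0 : ContinuousAt w 0)
    (hg' : ∀ r ∈ Ioo 0 R, HasDerivAt g' (g'' r) r)
    (hode : ∀ r ∈ Ioo 0 R, g'' r + H r * g' r + lam * g r = 0)
    (hgpos : ∀ r ∈ Ioo 0 R, 0 < g r)
    (hg'lim : Tendsto g' (𝓝[>] 0) (𝓝 0)) :
    ∀ r ∈ Ioo 0 R, g' r < 0 := by
  have hflux : ∀ r ∈ Ioo 0 R, HasDerivAt (fun x => w x * g' x) (-(lam * w r * g r)) r := by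
    intro r hr
    refine ((hw r hr).mul (hg' r hr)).congr_deriv ?_
    linear_combination w r * hode r hr
  have hflux_lim : Tendsto (fun x => w x * g' x) (𝓝[>] 0) (𝓝 0) := by
    simpa using (hw0.tendsto.mono_left nhdsWithin_le_nhds).mul hg'lim
  have hflux_neg := neg_of_hasDerivAt_neg_of_tendsto_zero hflux
    (fun r hr => neg_neg_of_pos (mul_pos (mul_pos hlam (hwpos r hr)) (hgpos r hr))) hflux_lim
  intro r hr
  exact neg_of_mul_neg_right (hflux_neg r hr) (hwpos r hr).le

theorem stmt_1_general
    (k n : ℕ) (hk : k = 2 ∨ k = 4 ∨ k = 8) (hn : 2 ≤ n)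
    (H : ℝ → ℝ)
    (hH : ∀ r : ℝ, 0 < r →
      H r = ((k : ℝ) * n - 1) * (Real.cosh r / Real.sinh r) + ((k : ℝ) - 1) * Real.tanh r)
    (R lam1 : ℝ) (hlam1 : 0 < lam1)
    (g₁ g₁' g₁'' : ℝ → ℝ)
    (hg₁d' : ∀ r : ℝ, 0 < r → HasDerivAt g₁' (g₁'' r) r)
    (hg₁ode : ∀ r : ℝ, 0 < r → g₁'' r + H r * g₁' r + lam1 * g₁ r = 0)
    (hg₁pos : ∀ r ∈ Set.Ioo (0 : ℝ) R, 0 < g₁ r)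
    (hg₁'lim : Filter.Tendsto g₁' (nhdsWithin 0 (Set.Ioi 0)) (nhds 0)) :
    ∀ r ∈ Set.Ioo (0 : ℝ) R, g₁' r ≤ 0 := by
  have hk1 : 1 ≤ k := by rcases hk with h | h | h <;> omega
  have hkn : 1 ≤ k * n := Nat.mul_pos hk1 (by omega)
  set w : ℝ → ℝ := fun x => sinh x ^ (k * n - 1) * cosh x ^ (k - 1)
  have hw : ∀ r ∈ Ioo 0 R, HasDerivAt w (H r * w r) r := by
    intro r hr
    refine (hasDerivAt_sinh_pow_mul_cosh_pow (k * n - 1) (k - 1) hr.1.ne').congr_deriv ?_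
    rw [hH r hr.1]
    push_cast [Nat.cast_sub hkn, Nat.cast_sub hk1]
    rfl
  have hwpos : ∀ r ∈ Ioo 0 R, 0 < w r := fun r hr =>
    mul_pos (pow_pos (sinh_pos_iff.mpr hr.1) _) (pow_pos (cosh_pos r) _)
  have hw0 : ContinuousAt w 0 := by fun_prop
  exact fun r hr => (deriv_neg_of_sturmLiouville hlam1 hw hwpos hw0 (fun r hr => hg₁d' r hr.1)
    (fun r hr => hg₁ode r hr.1) hg₁pos hg₁'lim r hr).le

/-- The radial part of the first Dirichlet eigenfunction of a geodesic
ball in 𝕂ℍⁿ is nonincreasing: g₁′(r) ≤ 0 for all r ∈ (0,R). -/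
theorem stmt_1
    (k n : ℕ) (hk : k = 2 ∨ k = 4 ∨ k = 8) (hn : 2 ≤ n) (hk8 : k = 8 → n = 2)
    (H : ℝ → ℝ)
    (hH : ∀ r : ℝ, 0 < r →
      H r = ((k : ℝ) * n - 1) * (Real.cosh r / Real.sinh r) + ((k : ℝ) - 1) * Real.tanh r)
    (R lam1 : ℝ) (hR : 0 < R) (hlam1 : 0 < lam1)
    (g₁ g₁' g₁'' : ℝ → ℝ)
    (hg₁d : ∀ r : ℝ, 0 < r → HasDerivAt g₁ (g₁' r) r)
    (hg₁d' : ∀ r : ℝ, 0 < r → HasDerivAt g₁' (g₁'' r) r)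
    (hg₁c : ContinuousOn g₁'' (Set.Ioi 0))
    (hg₁ode : ∀ r : ℝ, 0 < r → g₁'' r + H r * g₁' r + lam1 * g₁ r = 0)
    (hg₁pos : ∀ r ∈ Set.Ioo (0 : ℝ) R, 0 < g₁ r)
    (hg₁R : g₁ R = 0)
    (hg₁lim : Filter.Tendsto g₁ (nhdsWithin 0 (Set.Ioi 0)) (nhds 1))
    (hg₁'lim : Filter.Tendsto g₁' (nhdsWithin 0 (Set.Ioi 0)) (nhds 0)) :
    ∀ r ∈ Set.Ioo (0 : ℝ) R, g₁' r ≤ 0 :=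
  stmt_1_general k n hk hn H hH R lam1 hlam1 g₁ g₁' g₁'' hg₁d' hg₁ode hg₁pos hg₁'lim
end

section
/- Assume in addition that lim_{r→0⁺} g₁′(r)/r exists in ℝ. Then the function φ = g₁′/g₁ satisfies φ′(r) < 0 for all r ∈ (0,R); in particular, g₁ is strictly log-concave on (0,R). -/
/-!
With φ = g₁'/g₁ the ODE becomes the Riccati equation φ' = -λ₁ - Hφ - φ². Since r H(r) → a = kn - 1,
l'Hôpital applied to g₁'/r gives φ'(0⁺) = -λ₁/(1 + a) < 0. If φ' vanished in (0, R), then at its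
first zero r₀ we would have φ(r₀) < φ(0⁺) = 0, and differentiating the Riccati equation gives
φ''(r₀) = -H'(r₀) φ(r₀) < 0 because H is decreasing; this contradicts φ' < 0 on (0, r₀).
-/

open Real Filter Set Topology

lemma StrictAntiOn.lt_of_tendsto_nhdsGT {α β : Type*} [LinearOrder α] [TopologicalSpace α]
    [OrderTopology α] [DenselyOrdered α] [LinearOrder β] [TopologicalSpace β]
    [OrderClosedTopology β] {f : α → β} {a b : α} {l : β} (hf : StrictAntiOn f (Ioc a b))
    (hab : a < b) (hl : Tendsto f (𝓝[>] a) (𝓝 l)) : f b < l := by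
  obtain ⟨x, hax, hxb⟩ := exists_between hab
  have : NeBot (𝓝[>] a) := nhdsGT_neBot_of_exists_gt ⟨b, hab⟩
  refine (hf ⟨hax, hxb.le⟩ ⟨hab, le_rfl⟩ hxb).trans_le (ge_of_tendsto hl ?_)
  filter_upwards [Ioo_mem_nhdsGT hax] with y hy
  exact (hf ⟨hy.1, hy.2.le.trans hxb.le⟩ ⟨hax, hxb.le⟩ hy.2).le

lemma exists_first_zero_of_eventually_neg {f : ℝ → ℝ} {a c : ℝ} (hf : ContinuousOn f (Ioc a c))
    (hac : a < c) (hneg : ∀ᶠ x in 𝓝[>] a, f x < 0) (hc : 0 ≤ f c) :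
    ∃ x₀ ∈ Ioc a c, f x₀ = 0 ∧ ∀ x ∈ Ioo a x₀, f x < 0 := by
  obtain ⟨u, hau, hsub⟩ := mem_nhdsGT_iff_exists_Ioo_subset.1 hneg
  obtain ⟨ε, haε, hεu⟩ := exists_between (lt_min hau hac)
  have hεneg : ∀ x ∈ Ioc a ε, f x < 0 := fun x hx =>
    hsub ⟨hx.1, hx.2.trans_lt (hεu.trans_le (min_le_left _ _))⟩
  have hcont : ∀ y ≤ c, ContinuousOn f (Icc ε y) := fun y hy =>
    hf.mono fun x hx => ⟨haε.trans_le hx.1, hx.2.trans hy⟩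
  have hzero : ∀ y, ε ≤ y → y ≤ c → 0 ≤ f y → ∃ z ∈ Icc ε y, f z = 0 := fun y hεy hyc hy =>
    intermediate_value_Icc hεy (hcont y hyc) ⟨(hεneg ε ⟨haε, le_rfl⟩).le, hy⟩
  set Z := Icc ε c ∩ f ⁻¹' {0}
  have hZ : IsClosed Z :=
    (hcont c le_rfl).preimage_isClosed_of_isClosed isClosed_Icc isClosed_singleton
  have hZbdd : BddBelow Z := ⟨ε, fun y hy => hy.1.1⟩
  obtain ⟨z, hz, hfz⟩ := hzero c (hεu.trans_le (min_le_right _ _)).le le_rfl hc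
  have hx₀ : sInf Z ∈ Z := hZ.csInf_mem ⟨z, hz, hfz⟩ hZbdd
  refine ⟨sInf Z, ⟨haε.trans_le hx₀.1.1, hx₀.1.2⟩, hx₀.2, fun x hx => ?_⟩
  by_contra! hfx
  rcases le_or_gt x ε with hxε | hεx
  · exact (hεneg x ⟨hx.1, hxε⟩).not_ge hfx
  · obtain ⟨z, hz, hfz⟩ := hzero x hεx.le (hx.2.le.trans hx₀.1.2) hfx
    have hzZ : z ∈ Z := ⟨⟨hz.1, hz.2.trans (hx.2.le.trans hx₀.1.2)⟩, hfz⟩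
    linarith [csInf_le hZbdd hzZ, hz.2, hx.2]

lemma hasDerivAt_div_of_linear_ode {g g' : ℝ → ℝ} {g'' h lam r : ℝ}
    (hg : HasDerivAt g (g' r) r) (hg' : HasDerivAt g' g'' r)
    (hode : g'' + h * g' r + lam * g r = 0) (hr : g r ≠ 0) :
    HasDerivAt (fun s => g' s / g s) (-lam - h * (g' r / g r) - (g' r / g r) ^ 2) r := by
  refine (hg'.div hg hr).congr_deriv ?_
  field_simp
  linear_combination g r * hode

lemma Filter.Tendsto.mul_of_tendsto_div_id {H u : ℝ → ℝ} {a M : ℝ}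
    (hH : Tendsto (fun r => r * H r) (𝓝[>] 0) (𝓝 a))
    (hu : Tendsto (fun r => u r / r) (𝓝[>] 0) (𝓝 M)) :
    Tendsto (fun r => H r * u r) (𝓝[>] 0) (𝓝 (a * M)) := by
  refine (hH.mul hu).congr' ?_
  filter_upwards [self_mem_nhdsWithin] with r (hr : 0 < r)
  field_simp

section Asymptotics

variable {H : ℝ → ℝ} {a lam L : ℝ}

lemma add_one_mul_eq_of_linear_ode {g g' g'' : ℝ → ℝ}
    (hH : Tendsto (fun r => r * H r) (𝓝[>] 0) (𝓝 a))
    (hg'd : ∀ r, 0 < r → HasDerivAt g' (g'' r) r)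
    (hode : ∀ r, 0 < r → g'' r + H r * g' r + lam * g r = 0)
    (hg : Tendsto g (𝓝[>] 0) (𝓝 1)) (hg' : Tendsto g' (𝓝[>] 0) (𝓝 0))
    (hL : Tendsto (fun r => g' r / r) (𝓝[>] 0) (𝓝 L)) :
    (1 + a) * L = -lam := by
  have hg'' : Tendsto g'' (𝓝[>] 0) (𝓝 (-(a * L) - lam)) := by
    have := (hH.mul_of_tendsto_div_id hL).neg.sub (hg.const_mul lam)
    rw [mul_one] at this
    refine this.congr' ?_
    filter_upwards [self_mem_nhdsWithin] with r hr
    linarith [hode r hr]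
  have hlhop : Tendsto (fun r => g' r / r) (𝓝[>] 0) (𝓝 (-(a * L) - lam)) :=
    HasDerivAt.lhopital_zero_right_on_Ioo (b := 1) one_pos (fun r hr => hg'd r hr.1)
      (fun r _ => hasDerivAt_id r) (fun _ _ => one_ne_zero) hg'
      (tendsto_id.mono_left nhdsWithin_le_nhds) (by simpa using hg'')
  linarith [tendsto_nhds_unique hL hlhop]

lemma tendsto_riccati_rhs_nhdsGT_zero {φ : ℝ → ℝ}
    (hH : Tendsto (fun r => r * H r) (𝓝[>] 0) (𝓝 a))
    (hφ : Tendsto φ (𝓝[>] 0) (𝓝 0)) (hL : Tendsto (fun r => φ r / r) (𝓝[>] 0) (𝓝 L)) :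
    Tendsto (fun r => -lam - H r * φ r - φ r ^ 2) (𝓝[>] 0) (𝓝 (-lam - a * L)) := by
  simpa using (tendsto_const_nhds.sub (hH.mul_of_tendsto_div_id hL)).sub (hφ.pow 2)

end Asymptotics

lemma riccati_rhs_neg_of_eventually_neg {H H' φ : ℝ → ℝ} {lam a b : ℝ}
    (hH : ∀ r ∈ Ioo a b, HasDerivAt H (H' r) r) (hH' : ∀ r ∈ Ioo a b, H' r < 0)
    (hφ : ∀ r ∈ Ioo a b, HasDerivAt φ (-lam - H r * φ r - φ r ^ 2) r)
    (hφa : Tendsto φ (𝓝[>] a) (𝓝 0))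
    (hneg : ∀ᶠ r in 𝓝[>] a, -lam - H r * φ r - φ r ^ 2 < 0) :
    ∀ r ∈ Ioo a b, -lam - H r * φ r - φ r ^ 2 < 0 := by
  set ψ := fun r => -lam - H r * φ r - φ r ^ 2
  intro c hc
  by_contra! hψc
  have hψcont : ContinuousOn ψ (Ioo a b) := fun r hr =>
    (continuousAt_const.sub ((hH r hr).continuousAt.mul (hφ r hr).continuousAt)).sub
      ((hφ r hr).continuousAt.pow 2) |>.continuousWithinAt
  obtain ⟨r₀, hr₀, hψr₀, hψlt⟩ :=
    exists_first_zero_of_eventually_neg (hψcont.mono (Ioc_subset_Ioo_right hc.2)) hc.1 hneg hψc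
  have hr₀ab : r₀ ∈ Ioo a b := ⟨hr₀.1, hr₀.2.trans_lt hc.2⟩
  have hIoc : Ioc a r₀ ⊆ Ioo a b := Ioc_subset_Ioo_right hr₀ab.2
  have hanti : StrictAntiOn φ (Ioc a r₀) := by
    refine strictAntiOn_of_hasDerivWithinAt_neg (f' := ψ) (convex_Ioc a r₀)
      (fun r hr => (hφ r (hIoc hr)).continuousAt.continuousWithinAt) (fun r hr => ?_) ?_
    · exact (hφ r (hIoc (interior_subset hr))).hasDerivWithinAt
    · rw [interior_Ioc]
      exact hψlt
  have hφr₀ : φ r₀ < 0 := hanti.lt_of_tendsto_nhdsGT hr₀.1 hφa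
  have hφ' : HasDerivAt φ 0 r₀ := hψr₀ ▸ hφ r₀ hr₀ab
  -- at a zero of `ψ` the Riccati equation leaves only the term `-H' φ`, which is negative
  have hψ' : HasDerivAt ψ (-(H' r₀ * φ r₀)) r₀ :=
    (((hasDerivAt_const r₀ (-lam)).sub ((hH r₀ hr₀ab).mul hφ')).sub (hφ'.pow 2)).congr_deriv
      (by ring)
  have hsign := eventually_nhdsWithin_sign_eq_of_deriv_neg
    (hψ'.deriv ▸ by nlinarith [hH' r₀ hr₀ab]) hψr₀
  obtain ⟨x, hx, hxsign⟩ :=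
    (Filter.Eventually.and (Ioo_mem_nhdsLT hr₀.1) (nhdsWithin_le_nhds hsign)).exists
  have := hψlt x hx
  rw [sign_neg this, sign_pos (sub_pos.2 hx.2)] at hxsign
  exact absurd hxsign (by decide)

lemma strictConcaveOn_log_of_hasDerivAt_div {g g' ψ : ℝ → ℝ} {a b : ℝ}
    (hg : ∀ r ∈ Ioo a b, HasDerivAt g (g' r) r) (hpos : ∀ r ∈ Ioo a b, 0 < g r)
    (hdiv : ∀ r ∈ Ioo a b, HasDerivAt (fun s => g' s / g s) (ψ r) r)
    (hψ : ∀ r ∈ Ioo a b, ψ r < 0) :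
    StrictConcaveOn ℝ (Ioo a b) (fun r => log (g r)) := by
  have hlog : ∀ r ∈ Ioo a b, HasDerivAt (fun s => log (g s)) (g' r / g r) r :=
    fun r hr => (hg r hr).log (hpos r hr).ne'
  have hanti : StrictAntiOn (fun s => g' s / g s) (Ioo a b) := by
    refine strictAntiOn_of_hasDerivWithinAt_neg (f' := ψ) (convex_Ioo a b)
      (fun r hr => (hdiv r hr).continuousAt.continuousWithinAt) ?_ ?_ <;> rw [interior_Ioo]
    · exact fun r hr => (hdiv r hr).hasDerivWithinAt
    · exact hψ
  refine StrictAntiOn.strictConcaveOn_of_deriv (convex_Ioo a b)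
    (fun r hr => (hlog r hr).continuousAt.continuousWithinAt) ?_
  rw [interior_Ioo]
  exact hanti.congr fun r hr => ((hlog r hr).deriv).symm

-- For `a = kn - 1`, `b = k - 1` this is the mean curvature of the geodesic sphere of radius `r`
-- in `𝕂ℍⁿ`, the drift `H` of the radial Laplacian.
noncomputable def sphereMeanCurvature (a b r : ℝ) : ℝ := a * (cosh r / sinh r) + b * tanh r

lemma hasDerivAt_sphereMeanCurvature (a b : ℝ) {r : ℝ} (hr : r ≠ 0) :
    HasDerivAt (sphereMeanCurvature a b) (-a / sinh r ^ 2 + b / cosh r ^ 2) r := by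
  have hs : sinh r ≠ 0 := sinh_ne_zero.2 hr
  have hc : cosh r ≠ 0 := (cosh_pos r).ne'
  have hcoth := (hasDerivAt_cosh r).div (hasDerivAt_sinh r) hs
  have htanh := (hasDerivAt_sinh r).div (hasDerivAt_cosh r) hc
  rw [show sinh / cosh = tanh from funext fun x => (tanh_eq_sinh_div_cosh x).symm] at htanh
  have hid : cosh r * cosh r - sinh r * sinh r = 1 := by linear_combination cosh_sq_sub_sinh_sq r
  rw [hid] at htanh
  rw [← neg_sub, hid] at hcoth
  exact ((hcoth.const_mul a).add (htanh.const_mul b)).congr_deriv (by ring)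

lemma deriv_sphereMeanCurvature_neg {a b r : ℝ} (ha : 0 < a) (hba : b ≤ a) (hr : r ≠ 0) :
    -a / sinh r ^ 2 + b / cosh r ^ 2 < 0 := by
  have hs : 0 < sinh r ^ 2 := by positivity
  have hsc : sinh r ^ 2 < cosh r ^ 2 := by linarith [cosh_sq_sub_sinh_sq r]
  have : b / cosh r ^ 2 ≤ a / cosh r ^ 2 := by gcongr
  linarith [neg_div (sinh r ^ 2) a, div_lt_div_of_pos_left ha hs hsc]

lemma tendsto_mul_sphereMeanCurvature (a b : ℝ) :
    Tendsto (fun r => r * sphereMeanCurvature a b r) (𝓝[≠] 0) (𝓝 a) := by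
  have hsinh : Tendsto (fun r => sinh r / r) (𝓝[≠] 0) (𝓝 1) := by
    simpa [div_eq_inv_mul, cosh_zero] using
      hasDerivAt_iff_tendsto_slope_zero.1 (hasDerivAt_sinh 0)
  have hcosh : Tendsto cosh (𝓝[≠] 0) (𝓝 1) := by
    simpa using (continuous_cosh.tendsto 0).mono_left nhdsWithin_le_nhds
  have htanh : Tendsto (fun r => r * tanh r) (𝓝[≠] 0) (𝓝 0) := by
    have : Continuous fun r => r * (sinh r / cosh r) :=
      continuous_id.mul (continuous_sinh.div continuous_cosh fun r => (cosh_pos r).ne')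
    simpa [← tanh_eq_sinh_div_cosh] using (this.tendsto 0).mono_left nhdsWithin_le_nhds
  have := (hcosh.div hsinh one_ne_zero).const_mul a |>.add (htanh.const_mul b)
  rw [div_one, mul_one, mul_zero, add_zero] at this
  refine this.congr' ?_
  filter_upwards [self_mem_nhdsWithin] with r (hr : r ≠ 0)
  simp only [sphereMeanCurvature, Pi.div_apply]
  field_simp

theorem stmt_2_general
    (k n : ℕ) (hk : k = 2 ∨ k = 4 ∨ k = 8) (hn : 2 ≤ n)
    (H : ℝ → ℝ)
    (hH : ∀ r : ℝ, 0 < r →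
      H r = ((k : ℝ) * n - 1) * (Real.cosh r / Real.sinh r) + ((k : ℝ) - 1) * Real.tanh r)
    (R lam1 : ℝ) (hlam1 : 0 < lam1)
    (g₁ g₁' g₁'' : ℝ → ℝ)
    (hg₁d : ∀ r : ℝ, 0 < r → HasDerivAt g₁ (g₁' r) r)
    (hg₁d' : ∀ r : ℝ, 0 < r → HasDerivAt g₁' (g₁'' r) r)
    (hg₁ode : ∀ r : ℝ, 0 < r → g₁'' r + H r * g₁' r + lam1 * g₁ r = 0)
    (hg₁pos : ∀ r ∈ Set.Ioo (0 : ℝ) R, 0 < g₁ r)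
    (hg₁lim : Filter.Tendsto g₁ (nhdsWithin 0 (Set.Ioi 0)) (nhds 1))
    (hg₁'lim : Filter.Tendsto g₁' (nhdsWithin 0 (Set.Ioi 0)) (nhds 0))
    (hquot : ∃ L : ℝ, Filter.Tendsto (fun r => g₁' r / r) (nhdsWithin 0 (Set.Ioi 0)) (nhds L)) :
    (∀ r ∈ Set.Ioo (0 : ℝ) R, deriv (fun s => g₁' s / g₁ s) r < 0) ∧
    StrictConcaveOn ℝ (Set.Ioo (0 : ℝ) R) (fun r => Real.log (g₁ r)) := by
  obtain ⟨L, hL⟩ := hquot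
  set a : ℝ := k * n - 1
  set b : ℝ := k - 1
  have hk2 : (2 : ℝ) ≤ k := by rcases hk with rfl | rfl | rfl <;> norm_num
  have hn2 : (2 : ℝ) ≤ n := by exact_mod_cast hn
  have ha : 0 < a := by nlinarith
  have hba : b ≤ a := by nlinarith
  have hHd (r : ℝ) (hr : r ∈ Ioo 0 R) : HasDerivAt H (-a / sinh r ^ 2 + b / cosh r ^ 2) r :=
    (hasDerivAt_sphereMeanCurvature a b hr.1.ne').congr_of_eventuallyEq
      (eventually_of_mem (Ioi_mem_nhds hr.1) hH)
  have hrH : Tendsto (fun r => r * H r) (𝓝[>] 0) (𝓝 a) :=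
    ((tendsto_mul_sphereMeanCurvature a b).mono_left (nhdsGT_le_nhdsNE 0)).congr'
      (eventually_nhdsWithin_of_forall fun r (hr : 0 < r) => congrArg (r * ·) (hH r hr).symm)
  have hφ0 : Tendsto (fun r => g₁' r / g₁ r) (𝓝[>] 0) (𝓝 0) := by
    have := hg₁'lim.div hg₁lim one_ne_zero
    rwa [zero_div] at this
  have hφL : Tendsto (fun r => g₁' r / g₁ r / r) (𝓝[>] 0) (𝓝 L) :=
    (div_one L ▸ hL.div hg₁lim one_ne_zero).congr fun r => div_right_comm _ _ _
  have hLa := add_one_mul_eq_of_linear_ode hrH hg₁d' hg₁ode hg₁lim hg₁'lim hL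
  have hψ0 := tendsto_riccati_rhs_nhdsGT_zero (lam := lam1) hrH hφ0 hφL
  have hψ0_neg : -lam1 - a * L < 0 := by nlinarith
  have hφ (r : ℝ) (hr : r ∈ Ioo 0 R) := hasDerivAt_div_of_linear_ode (hg₁d r hr.1)
    (hg₁d' r hr.1) (hg₁ode r hr.1) (hg₁pos r hr).ne'
  have hψ := riccati_rhs_neg_of_eventually_neg hHd
    (fun r hr => deriv_sphereMeanCurvature_neg ha hba hr.1.ne') hφ hφ0
    (hψ0.eventually (gt_mem_nhds hψ0_neg))
  exact ⟨fun r hr => (hφ r hr).deriv ▸ hψ r hr,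
    strictConcaveOn_log_of_hasDerivAt_div (fun r hr => hg₁d r hr.1) hg₁pos hφ hψ⟩

/-- Assuming additionally that g₁′(r)/r has a finite limit as r → 0⁺,
the function φ = g₁′/g₁ satisfies φ′(r) < 0 on (0,R); in particular g₁ is strictly
log-concave on (0,R). -/
theorem stmt_2
    (k n : ℕ) (hk : k = 2 ∨ k = 4 ∨ k = 8) (hn : 2 ≤ n) (hk8 : k = 8 → n = 2)
    (H : ℝ → ℝ)
    (hH : ∀ r : ℝ, 0 < r →
      H r = ((k : ℝ) * n - 1) * (Real.cosh r / Real.sinh r) + ((k : ℝ) - 1) * Real.tanh r)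
    (R lam1 : ℝ) (hR : 0 < R) (hlam1 : 0 < lam1)
    (g₁ g₁' g₁'' : ℝ → ℝ)
    (hg₁d : ∀ r : ℝ, 0 < r → HasDerivAt g₁ (g₁' r) r)
    (hg₁d' : ∀ r : ℝ, 0 < r → HasDerivAt g₁' (g₁'' r) r)
    (hg₁c : ContinuousOn g₁'' (Set.Ioi 0))
    (hg₁ode : ∀ r : ℝ, 0 < r → g₁'' r + H r * g₁' r + lam1 * g₁ r = 0)
    (hg₁pos : ∀ r ∈ Set.Ioo (0 : ℝ) R, 0 < g₁ r)
    (hg₁R : g₁ R = 0)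
    (hg₁lim : Filter.Tendsto g₁ (nhdsWithin 0 (Set.Ioi 0)) (nhds 1))
    (hg₁'lim : Filter.Tendsto g₁' (nhdsWithin 0 (Set.Ioi 0)) (nhds 0))
    (hquot : ∃ L : ℝ, Filter.Tendsto (fun r => g₁' r / r) (nhdsWithin 0 (Set.Ioi 0)) (nhds L)) :
    (∀ r ∈ Set.Ioo (0 : ℝ) R, deriv (fun s => g₁' s / g₁ s) r < 0) ∧
    StrictConcaveOn ℝ (Set.Ioo (0 : ℝ) R) (fun r => Real.log (g₁ r)) :=
  stmt_2_general k n hk hn H hH R lam1 hlam1 g₁ g₁' g₁'' hg₁d hg₁d' hg₁ode hg₁pos hg₁lim hg₁'lim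
    hquot
end

section
/- Let 0 < a < b and μ, ν ∈ ℝ. Suppose f, h : [a,b] → ℝ are twice continuously differentiable and satisfy f″ + H·f′ + μ·f = 0 and h″ + H·h′ + ν·h = 0 on (a,b), with f(a) = f(b) = 0, f > 0 on (a,b), and h > 0 on all of [a,b]. Then μ ≥ ν. -/
/-!
Sturm comparison via the weighted Wronskian `W = J (f' h - f h')`, where
`J = sinh^(kn-1) cosh^(k-1)` satisfies `J' = H J`. The two equations give
`W' = (ν - μ) J f h`, so if `ν > μ` then `W` is strictly increasing on `[a, b]`. But `f`
vanishes at both ends and is positive inside, so `f' a ≥ 0 ≥ f' b`, whence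
`W a = J f' h ≥ 0 ≥ W b` at the endpoints.
-/

open Real Set

theorem IsMinOn.hasDerivWithinAt_Icc_left_nonneg {f : ℝ → ℝ} {f' a b : ℝ} (hab : a < b)
    (hmin : IsMinOn f (Icc a b) a) (hf : HasDerivWithinAt f f' (Icc a b) a) : 0 ≤ f' := by
  have hcone : b - a ∈ posTangentConeAt (Icc a b) a :=
    sub_mem_posTangentConeAt_of_segment_subset (segment_eq_Icc hab.le).subset
  have := hmin.localize.hasFDerivWithinAt_nonneg hf.hasFDerivWithinAt hcone
  simp only [ContinuousLinearMap.toSpanSingleton_apply, smul_eq_mul] at this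
  exact nonneg_of_mul_nonneg_right this (sub_pos.2 hab)

theorem IsMinOn.hasDerivWithinAt_Icc_right_nonpos {f : ℝ → ℝ} {f' a b : ℝ} (hab : a < b)
    (hmin : IsMinOn f (Icc a b) b) (hf : HasDerivWithinAt f f' (Icc a b) b) : f' ≤ 0 := by
  have hcone : a - b ∈ posTangentConeAt (Icc a b) b :=
    sub_mem_posTangentConeAt_of_segment_subset (by rw [segment_symm, segment_eq_Icc hab.le])
  have := hmin.localize.hasFDerivWithinAt_nonneg hf.hasFDerivWithinAt hcone
  simp only [ContinuousLinearMap.toSpanSingleton_apply, smul_eq_mul] at this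
  exact nonpos_of_mul_nonneg_right this (sub_neg.2 hab)

theorem hasDerivAt_sinh_rpow_mul_cosh_rpow (p q : ℝ) {r : ℝ} (hr : 0 < r) :
    HasDerivAt (fun x => sinh x ^ p * cosh x ^ q)
      ((p * (cosh r / sinh r) + q * tanh r) * (sinh r ^ p * cosh r ^ q)) r := by
  have hs : sinh r ≠ 0 := (sinh_pos_iff.2 hr).ne'
  have hc : cosh r ≠ 0 := (cosh_pos r).ne'
  refine (((hasDerivAt_sinh r).rpow_const (p := p) (Or.inl hs)).mul
    ((hasDerivAt_cosh r).rpow_const (p := q) (Or.inl hc))).congr_deriv ?_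
  rw [rpow_sub_one hs, rpow_sub_one hc, tanh_eq_sinh_div_cosh]
  field_simp

section SturmComparison

variable {P J f f' f'' h h' h'' : ℝ → ℝ} {μ ν r : ℝ}

theorem hasDerivAt_weightedWronskian (hJ : HasDerivAt J (P r * J r) r)
    (hf : HasDerivAt f (f' r) r) (hf' : HasDerivAt f' (f'' r) r)
    (hh : HasDerivAt h (h' r) r) (hh' : HasDerivAt h' (h'' r) r)
    (hfode : f'' r + P r * f' r + μ * f r = 0) (hhode : h'' r + P r * h' r + ν * h r = 0) :
    HasDerivAt (fun x => J x * (f' x * h x - f x * h' x)) ((ν - μ) * (J r * (f r * h r))) r := by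
  refine (hJ.fun_mul ((hf'.fun_mul hh).fun_sub (hf.fun_mul hh'))).congr_deriv ?_
  linear_combination (J r * h r) * hfode - (J r * f r) * hhode

theorem sturm_comparison {a b : ℝ} (hab : a < b)
    (hJ : ∀ r ∈ Icc a b, HasDerivAt J (P r * J r) r) (hJpos : ∀ r ∈ Icc a b, 0 < J r)
    (hfd : ∀ r ∈ Icc a b, HasDerivAt f (f' r) r)
    (hfd' : ∀ r ∈ Icc a b, HasDerivAt f' (f'' r) r)
    (hhd : ∀ r ∈ Icc a b, HasDerivAt h (h' r) r)
    (hhd' : ∀ r ∈ Icc a b, HasDerivAt h' (h'' r) r)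
    (hfode : ∀ r ∈ Ioo a b, f'' r + P r * f' r + μ * f r = 0)
    (hhode : ∀ r ∈ Ioo a b, h'' r + P r * h' r + ν * h r = 0)
    (hfa : f a = 0) (hfb : f b = 0) (hfpos : ∀ r ∈ Ioo a b, 0 < f r)
    (hhpos : ∀ r ∈ Icc a b, 0 < h r) : ν ≤ μ := by
  by_contra! hμν
  set W : ℝ → ℝ := fun x => J x * (f' x * h x - f x * h' x)
  have ha : a ∈ Icc a b := left_mem_Icc.2 hab.le
  have hb : b ∈ Icc a b := right_mem_Icc.2 hab.le
  have hW : ∀ r ∈ Ioo a b, HasDerivAt W ((ν - μ) * (J r * (f r * h r))) r := fun r hr =>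
    hasDerivAt_weightedWronskian (hJ r (Ioo_subset_Icc_self hr)) (hfd r (Ioo_subset_Icc_self hr))
      (hfd' r (Ioo_subset_Icc_self hr)) (hhd r (Ioo_subset_Icc_self hr))
      (hhd' r (Ioo_subset_Icc_self hr)) (hfode r hr) (hhode r hr)
  have hWmono : StrictMonoOn W (Icc a b) := by
    refine strictMonoOn_of_deriv_pos (convex_Icc a b) (fun r hr => ?_) fun r hr => ?_
    · exact ((hJ r hr).fun_mul (((hfd' r hr).fun_mul (hhd r hr)).fun_sub
        ((hfd r hr).fun_mul (hhd' r hr)))).continuousAt.continuousWithinAt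
    · rw [interior_Icc] at hr
      rw [(hW r hr).deriv]
      have hr' := Ioo_subset_Icc_self hr
      exact mul_pos (sub_pos.2 hμν) (mul_pos (hJpos r hr') (mul_pos (hfpos r hr) (hhpos r hr')))
  have hfnonneg : ∀ r ∈ Icc a b, 0 ≤ f r := by
    intro r hr
    rcases eq_endpoints_or_mem_Ioo_of_mem_Icc hr with rfl | rfl | hr
    exacts [hfa.ge, hfb.ge, (hfpos r hr).le]
  have hfa' : 0 ≤ f' a := IsMinOn.hasDerivWithinAt_Icc_left_nonneg hab
    (fun r hr => by simpa [hfa] using hfnonneg r hr) (hfd a ha).hasDerivWithinAt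
  have hfb' : f' b ≤ 0 := IsMinOn.hasDerivWithinAt_Icc_right_nonpos hab
    (fun r hr => by simpa [hfb] using hfnonneg r hr) (hfd b hb).hasDerivWithinAt
  have hWa : 0 ≤ W a := by
    simp only [W, hfa, zero_mul, sub_zero]
    exact mul_nonneg (hJpos a ha).le (mul_nonneg hfa' (hhpos a ha).le)
  have hWb : W b ≤ 0 := by
    simp only [W, hfb, zero_mul, sub_zero]
    exact mul_nonpos_of_nonneg_of_nonpos (hJpos b hb).le
      (mul_nonpos_of_nonpos_of_nonneg hfb' (hhpos b hb).le)
  linarith [hWmono ha hb hab]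

end SturmComparison

theorem stmt_3_general
    (k n : ℕ)
    (H : ℝ → ℝ)
    (hH : ∀ r : ℝ, 0 < r →
      H r = ((k : ℝ) * n - 1) * (Real.cosh r / Real.sinh r) + ((k : ℝ) - 1) * Real.tanh r)
    (a b : ℝ) (ha : 0 < a) (hab : a < b) (μ ν : ℝ)
    (f f' f'' h h' h'' : ℝ → ℝ)
    (hfd : ∀ r ∈ Set.Icc a b, HasDerivAt f (f' r) r)
    (hfd' : ∀ r ∈ Set.Icc a b, HasDerivAt f' (f'' r) r)
    (hhd : ∀ r ∈ Set.Icc a b, HasDerivAt h (h' r) r)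
    (hhd' : ∀ r ∈ Set.Icc a b, HasDerivAt h' (h'' r) r)
    (hfode : ∀ r ∈ Set.Ioo a b, f'' r + H r * f' r + μ * f r = 0)
    (hhode : ∀ r ∈ Set.Ioo a b, h'' r + H r * h' r + ν * h r = 0)
    (hfa : f a = 0) (hfb : f b = 0)
    (hfpos : ∀ r ∈ Set.Ioo a b, 0 < f r)
    (hhpos : ∀ r ∈ Set.Icc a b, 0 < h r) :
    ν ≤ μ := by
  have hpos : ∀ r ∈ Icc a b, 0 < r := fun r hr => ha.trans_le hr.1
  refine sturm_comparison (P := H)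
    (J := fun x => sinh x ^ ((k : ℝ) * n - 1) * cosh x ^ ((k : ℝ) - 1)) hab
    (fun r hr => ?_) (fun r hr => ?_) hfd hfd' hhd hhd' hfode hhode hfa hfb hfpos hhpos
  · rw [hH r (hpos r hr)]
    exact hasDerivAt_sinh_rpow_mul_cosh_rpow _ _ (hpos r hr)
  · exact mul_pos (rpow_pos_of_pos (sinh_pos_iff.2 (hpos r hr)) _) (rpow_pos_of_pos (cosh_pos r) _)

/-- Sturm-type comparison. Let 0 < a < b, μ, ν ∈ ℝ. If f, h are C² on
[a,b] with f″ + H·f′ + μ·f = 0 and h″ + H·h′ + ν·h = 0 on (a,b), f(a) = f(b) = 0,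
f > 0 on (a,b), and h > 0 on [a,b], then μ ≥ ν. Here
H(r) = (kn−1)·coth(r) + (k−1)·tanh(r). -/
theorem stmt_3
    (k n : ℕ) (hk : k = 2 ∨ k = 4 ∨ k = 8) (hn : 2 ≤ n) (hk8 : k = 8 → n = 2)
    (H : ℝ → ℝ)
    (hH : ∀ r : ℝ, 0 < r →
      H r = ((k : ℝ) * n - 1) * (Real.cosh r / Real.sinh r) + ((k : ℝ) - 1) * Real.tanh r)
    (a b : ℝ) (ha : 0 < a) (hab : a < b) (μ ν : ℝ)
    (f f' f'' h h' h'' : ℝ → ℝ)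
    (hfd : ∀ r ∈ Set.Icc a b, HasDerivAt f (f' r) r)
    (hfd' : ∀ r ∈ Set.Icc a b, HasDerivAt f' (f'' r) r)
    (hfc : ContinuousOn f'' (Set.Icc a b))
    (hhd : ∀ r ∈ Set.Icc a b, HasDerivAt h (h' r) r)
    (hhd' : ∀ r ∈ Set.Icc a b, HasDerivAt h' (h'' r) r)
    (hhc : ContinuousOn h'' (Set.Icc a b))
    (hfode : ∀ r ∈ Set.Ioo a b, f'' r + H r * f' r + μ * f r = 0)
    (hhode : ∀ r ∈ Set.Ioo a b, h'' r + H r * h' r + ν * h r = 0)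
    (hfa : f a = 0) (hfb : f b = 0)
    (hfpos : ∀ r ∈ Set.Ioo a b, 0 < f r)
    (hhpos : ∀ r ∈ Set.Icc a b, 0 < h r) :
    ν ≤ μ :=
  stmt_3_general k n H hH a b ha hab μ ν f f' f'' h h' h'' hfd hfd' hhd hhd' hfode hhode hfa hfb
    hfpos hhpos
end

section
/- Let λ₂ ∈ ℝ, ε > 0, and let g : (0,ε) → ℝ be a twice continuously differentiable solution of g″ + H·g′ + (λ₂ − Λ)·g = 0 on (0,ε) with g(r)/r → 1 as r → 0⁺. Then (g(r) − r)/r³ → −((2/3)·kn + 2k − 8/3 + λ₂)/(2kn + 4) as r → 0⁺; that is, g(r) = r − (((2/3)kn + 2k − 8/3 + λ₂)/(2kn+4))·r³ + o(r³) at r = 0. -/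
/-!
Put `p = sinh ^ α * cosh ^ β`, so that `p' = H p`. Then `W = p (r g' - g) = r² p (g / r)'`
satisfies `W' = -(H + (λ - Λ) r) p g`. Near `0` the coefficient `H + (λ - Λ) r` is
`~ c r` with `c = 2α/3 + 2β + λ` and `p ~ r ^ α`, so `W' ~ -c r ^ (α + 2)` is bounded and `W`
has a limit `L` at `0⁺`. If `L ≠ 0`, then `(g / r)' = W / (r² p)` is of size at least `|L| / r`
(this is where `α ≥ -1` enters), which is incompatible with `g / r → 1`. Hence `W → 0`, and two
applications of l'Hôpital's rule give `W ~ -c r ^ (α + 3) / (α + 3)` and then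
`(g / r - 1) / r² → -c / (2 (α + 3))`. On `𝕂ℍⁿ`, `α = kn - 1` and `β = k - 1`.
-/

open Real Filter Set Topology

lemma tendsto_rpow_nhdsGT_zero {q : ℝ} (hq : 0 < q) :
    Tendsto (fun r : ℝ => r ^ q) (𝓝[>] 0) (𝓝 0) := by
  have h := (continuousAt_rpow_const 0 q (Or.inr hq.le)).tendsto
  rw [zero_rpow hq.ne'] at h
  exact h.mono_left nhdsWithin_le_nhds

theorem exists_tendsto_nhdsGT_of_hasDerivAt_of_norm_le {E : Type*} [NormedAddCommGroup E]
    [NormedSpace ℝ E] [CompleteSpace E] {f f' : ℝ → E} {a C : ℝ}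
    (hf : ∀ᶠ x in 𝓝[>] a, HasDerivAt f (f' x) x) (hC : ∀ᶠ x in 𝓝[>] a, ‖f' x‖ ≤ C) :
    ∃ L, Tendsto f (𝓝[>] a) (𝓝 L) := by
  obtain ⟨b, hab, hb⟩ := mem_nhdsGT_iff_exists_Ioo_subset.1 (hf.and hC)
  have hlip : LipschitzOnWith C.toNNReal f (Ioo a b) :=
    (convex_Ioo a b).lipschitzOnWith_of_nnnorm_hasDerivWithin_le
      (fun x hx => (hb hx).1.hasDerivWithinAt)
      (fun x hx => by rw [← NNReal.coe_le_coe, coe_nnnorm]; exact (hb hx).2.trans (le_coe_toNNReal C))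
  have hcauchy : Cauchy (map f (𝓝[>] a)) :=
    (cauchy_nhds.mono' inferInstance nhdsWithin_le_nhds).map_of_le
      hlip.uniformContinuousOn (le_principal_iff.2 (Ioo_mem_nhdsGT hab))
  exact cauchy_map_iff_exists_tendsto.1 hcauchy

theorem not_tendsto_nhds_of_div_le_deriv {z z' : ℝ → ℝ} {c z₀ : ℝ} (hc : 0 < c)
    (hz : ∀ᶠ r in 𝓝[>] 0, HasDerivAt z (z' r) r) (hle : ∀ᶠ r in 𝓝[>] 0, c / r ≤ z' r) :
    ¬Tendsto z (𝓝[>] 0) (𝓝 z₀) := by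
  obtain ⟨δ, hδ : 0 < δ, hsub⟩ := mem_nhdsGT_iff_exists_Ioo_subset.1 (hz.and hle)
  have hderiv : ∀ r ∈ Ioo 0 δ, HasDerivAt (fun r => z r - c * log r) (z' r - c / r) r := fun r hr =>
    div_eq_mul_inv c r ▸ (hsub hr).1.sub ((hasDerivAt_log hr.1.ne').const_mul c)
  have hmono : MonotoneOn (fun r => z r - c * log r) (Ioo 0 δ) :=
    monotoneOn_of_hasDerivWithinAt_nonneg (convex_Ioo 0 δ)
      (fun r hr => (hderiv r hr).continuousAt.continuousWithinAt)
      (fun r hr => (hderiv r (by simpa using hr)).hasDerivWithinAt)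
      (fun r hr => sub_nonneg.2 (hsub (by simpa using hr)).2)
  have hmid : δ / 2 ∈ Ioo 0 δ := ⟨by positivity, by linarith⟩
  have hbound : ∀ᶠ r in 𝓝[>] 0, z r ≤ z (δ / 2) - c * log (δ / 2) + c * log r := by
    filter_upwards [Ioo_mem_nhdsGT hmid.1] with r hr
    have := hmono ⟨hr.1, hr.2.trans hmid.2⟩ hmid hr.2.le
    linarith
  have hbot : Tendsto (fun r => z (δ / 2) - c * log (δ / 2) + c * log r) (𝓝[>] 0) atBot :=
    tendsto_atBot_add_const_left _ _ (tendsto_log_nhdsGT_zero.const_mul_atBot hc)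
  exact fun h => not_tendsto_atBot_of_tendsto_nhds h (tendsto_atBot_mono' _ hbound hbot)

theorem not_tendsto_of_hasDerivAt_div {z W P : ℝ → ℝ} {z₀ L K : ℝ} (hL : 0 < L)
    (hz : ∀ᶠ r in 𝓝[>] 0, HasDerivAt z (W r / P r) r) (hW : Tendsto W (𝓝[>] 0) (𝓝 L))
    (hP : ∀ᶠ r in 𝓝[>] 0, 0 < P r ∧ P r ≤ K * r) : ¬Tendsto z (𝓝[>] 0) (𝓝 z₀) := by
  obtain ⟨r, ⟨hPr, hPK⟩, hr⟩ := (hP.and self_mem_nhdsWithin).exists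
  have hK : 0 < K := pos_of_mul_pos_left (hPr.trans_le hPK) (le_of_lt hr)
  refine not_tendsto_nhds_of_div_le_deriv (c := L / 2 / K) (by positivity) hz ?_
  filter_upwards [hP, self_mem_nhdsWithin, hW.eventually (eventually_ge_nhds (half_lt_self hL))]
    with r ⟨hPr, hPK⟩ (hr : 0 < r) hWr
  calc L / 2 / K / r = L / 2 / (K * r) := by rw [div_div]
    _ ≤ W r / P r := div_le_div₀ (by linarith) hWr hPr hPK

theorem tendsto_zero_of_hasDerivAt_div {z W W' P : ℝ → ℝ} {z₀ w K : ℝ}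
    (hz : ∀ᶠ r in 𝓝[>] 0, HasDerivAt z (W r / P r) r) (hzlim : Tendsto z (𝓝[>] 0) (𝓝 z₀))
    (hW : ∀ᶠ r in 𝓝[>] 0, HasDerivAt W (W' r) r) (hW' : Tendsto W' (𝓝[>] 0) (𝓝 w))
    (hP : ∀ᶠ r in 𝓝[>] 0, 0 < P r ∧ P r ≤ K * r) : Tendsto W (𝓝[>] 0) (𝓝 0) := by
  obtain ⟨L, hL⟩ := exists_tendsto_nhdsGT_of_hasDerivAt_of_norm_le hW
    (hW'.norm.eventually (eventually_le_nhds (lt_add_one ‖w‖)))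
  rcases lt_trichotomy L 0 with hneg | rfl | hpos
  · refine absurd hzlim.neg (not_tendsto_of_hasDerivAt_div (neg_pos.2 hneg) ?_ hL.neg hP)
    exact hz.mono fun r h => neg_div (P r) (W r) ▸ h.neg
  · exact hL
  · exact absurd hzlim (not_tendsto_of_hasDerivAt_div hpos hz hL hP)

lemma tendsto_sinh_div_self : Tendsto (fun r => sinh r / r) (𝓝[>] 0) (𝓝 1) := by
  have h := (hasDerivAt_sinh 0).tendsto_slope_zero_right
  simpa [div_eq_inv_mul] using h

lemma tendsto_cosh_nhdsGT_zero : Tendsto cosh (𝓝[>] 0) (𝓝 1) :=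
  tendsto_nhdsWithin_of_tendsto_nhds (continuous_cosh.tendsto' 0 1 cosh_zero)

lemma tendsto_sinh_mul_cosh_sub_div_pow_three :
    Tendsto (fun r => (sinh r * cosh r - r) / r ^ 3) (𝓝[>] 0) (𝓝 (2 / 3)) := by
  refine HasDerivAt.lhopital_zero_nhdsGT (f' := fun r => 2 * sinh r ^ 2) (g' := fun r => 3 * r ^ 2)
    (Eventually.of_forall fun r => ?_) (Eventually.of_forall fun r => ?_) ?_ ?_ ?_ ?_
  · refine (((hasDerivAt_sinh r).mul (hasDerivAt_cosh r)).sub (hasDerivAt_id r)).congr_deriv ?_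
    linear_combination cosh_sq r
  · simpa using hasDerivAt_pow 3 r
  · filter_upwards [self_mem_nhdsWithin] with r (hr : 0 < r) using by positivity
  · exact tendsto_nhdsWithin_of_tendsto_nhds
      ((by fun_prop : Continuous fun r => sinh r * cosh r - r).tendsto' 0 0 (by simp))
  · exact tendsto_nhdsWithin_of_tendsto_nhds
      ((by fun_prop : Continuous fun r : ℝ => r ^ 3).tendsto' 0 0 (by simp))
  · have h := (tendsto_sinh_div_self.pow 2).const_mul (2 / 3)
    rw [one_pow, mul_one] at h
    refine h.congr' ?_
    filter_upwards [self_mem_nhdsWithin] with r (hr : 0 < r)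
    field_simp

lemma tendsto_hyperbolicCoeff_div_self (α β lam : ℝ) :
    Tendsto (fun r => (α * (cosh r / sinh r) + β * tanh r
      + (lam - (α / sinh r ^ 2 - β / cosh r ^ 2)) * r) / r) (𝓝[>] 0)
      (𝓝 (2 / 3 * α + 2 * β + lam)) := by
  have hcosh := tendsto_cosh_nhdsGT_zero
  have h := ((tendsto_sinh_mul_cosh_sub_div_pow_three.mul
      ((tendsto_sinh_div_self.inv₀ one_ne_zero).pow 2)).const_mul α).add
    (((tendsto_sinh_div_self.div hcosh one_ne_zero).add
      ((hcosh.pow 2).inv₀ (by norm_num))).const_mul β) |>.add_const lam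
  convert h.congr' ?_ using 2
  · norm_num; ring
  filter_upwards [self_mem_nhdsWithin] with r (hr : 0 < r)
  have hs := (sinh_pos_iff.2 hr).ne'
  have hc := (cosh_pos r).ne'
  rw [Pi.div_apply, tanh_eq_sinh_div_cosh]
  field_simp
  ring

noncomputable def sinhCoshWeight (α β r : ℝ) : ℝ := sinh r ^ α * cosh r ^ β

section SinhCoshWeight

variable {α β : ℝ}

lemma sinhCoshWeight_pos {r : ℝ} (hr : 0 < r) : 0 < sinhCoshWeight α β r :=
  mul_pos (rpow_pos_of_pos (sinh_pos_iff.2 hr) α) (rpow_pos_of_pos (cosh_pos r) β)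

lemma hasDerivAt_sinhCoshWeight {r : ℝ} (hr : 0 < r) :
    HasDerivAt (sinhCoshWeight α β)
      ((α * (cosh r / sinh r) + β * tanh r) * sinhCoshWeight α β r) r := by
  have hs := (sinh_pos_iff.2 hr).ne'
  have hc := (cosh_pos r).ne'
  refine (((hasDerivAt_sinh r).rpow_const (Or.inl hs)).mul
    ((hasDerivAt_cosh r).rpow_const (Or.inl hc))).congr_deriv ?_
  rw [rpow_sub_one hs, rpow_sub_one hc, tanh_eq_sinh_div_cosh, sinhCoshWeight]
  field_simp

lemma tendsto_sinhCoshWeight_div_rpow :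
    Tendsto (fun r => sinhCoshWeight α β r / r ^ α) (𝓝[>] 0) (𝓝 1) := by
  have h := (tendsto_sinh_div_self.rpow_const (p := α) (Or.inl one_ne_zero)).mul
    (tendsto_cosh_nhdsGT_zero.rpow_const (p := β) (Or.inl one_ne_zero))
  rw [one_rpow, one_rpow, one_mul] at h
  refine h.congr' ?_
  filter_upwards [self_mem_nhdsWithin] with r (hr : 0 < r)
  rw [div_rpow (sinh_pos_iff.2 hr).le hr.le, sinhCoshWeight]
  ring

lemma eventually_sq_mul_sinhCoshWeight_le (hα : -1 ≤ α) :
    ∀ᶠ r in 𝓝[>] 0, r ^ 2 * sinhCoshWeight α β r ≤ 2 * r := by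
  filter_upwards [Ioo_mem_nhdsGT one_pos,
    (tendsto_sinhCoshWeight_div_rpow (α := α) (β := β)).eventually (eventually_le_nhds one_lt_two)]
    with r ⟨hr0, hr1⟩ hp
  have hrα := rpow_pos_of_pos hr0 α
  have hp0 : 0 ≤ sinhCoshWeight α β r / r ^ α := (div_pos (sinhCoshWeight_pos hr0) hrα).le
  have hrpow : r ^ (α + 1) ≤ 1 := rpow_le_one hr0.le hr1.le (by linarith)
  calc r ^ 2 * sinhCoshWeight α β r = r * r ^ (α + 1) * (sinhCoshWeight α β r / r ^ α) := by
        rw [rpow_add_one hr0.ne', mul_div_assoc', eq_div_iff hrα.ne']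
        ring
    _ ≤ r * 1 * 2 := mul_le_mul (mul_le_mul_of_nonneg_left hrpow hr0.le) hp hp0 (by positivity)
    _ = 2 * r := by ring

end SinhCoshWeight

section RadialODE

variable {α β lam : ℝ} {H Λ g g' g'' : ℝ → ℝ}

noncomputable def weightedWronskian (α β : ℝ) (g g' : ℝ → ℝ) (r : ℝ) : ℝ :=
  sinhCoshWeight α β r * (r * g' r - g r)

lemma hasDerivAt_weightedWronskian_s5 {r : ℝ} (hr : 0 < r)
    (hH : H r = α * (cosh r / sinh r) + β * tanh r)
    (hg : HasDerivAt g (g' r) r) (hg' : HasDerivAt g' (g'' r) r)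
    (hode : g'' r + H r * g' r + (lam - Λ r) * g r = 0) :
    HasDerivAt (weightedWronskian α β g g')
      (-((H r + (lam - Λ r) * r) * sinhCoshWeight α β r * g r)) r := by
  refine ((hasDerivAt_sinhCoshWeight hr).mul
    (((hasDerivAt_id r).mul hg').sub hg)).congr_deriv ?_
  simp only [Pi.mul_apply, Pi.sub_apply, id_eq, ← hH]
  linear_combination (r * sinhCoshWeight α β r) * hode

lemma hasDerivAt_div_self_of_weightedWronskian {r : ℝ} (hr : 0 < r)
    (hg : HasDerivAt g (g' r) r) :
    HasDerivAt (fun s => g s / s)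
      (weightedWronskian α β g g' r / (r ^ 2 * sinhCoshWeight α β r)) r := by
  refine (hg.div (hasDerivAt_id r) hr.ne').congr_deriv ?_
  have := (sinhCoshWeight_pos hr (α := α) (β := β)).ne'
  rw [weightedWronskian, id_eq]
  field_simp

lemma tendsto_coeff_mul_sinhCoshWeight_mul_div_rpow
    (hH : ∀ r, 0 < r → H r = α * (cosh r / sinh r) + β * tanh r)
    (hΛ : ∀ r, 0 < r → Λ r = α / sinh r ^ 2 - β / cosh r ^ 2)
    (hglim : Tendsto (fun r => g r / r) (𝓝[>] 0) (𝓝 1)) :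
    Tendsto (fun r => (H r + (lam - Λ r) * r) * sinhCoshWeight α β r * g r / r ^ (α + 2))
      (𝓝[>] 0) (𝓝 (2 / 3 * α + 2 * β + lam)) := by
  have h := ((tendsto_hyperbolicCoeff_div_self α β lam).mul
    (tendsto_sinhCoshWeight_div_rpow (α := α) (β := β))).mul hglim
  rw [mul_one, mul_one] at h
  refine h.congr' ?_
  filter_upwards [self_mem_nhdsWithin] with r (hr : 0 < r)
  have := (rpow_pos_of_pos hr α).ne'
  rw [hH r hr, hΛ r hr, rpow_add hr, rpow_two]
  field_simp

theorem tendsto_weightedWronskian_div_rpow (hα : -1 ≤ α)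
    (hH : ∀ r, 0 < r → H r = α * (cosh r / sinh r) + β * tanh r)
    (hΛ : ∀ r, 0 < r → Λ r = α / sinh r ^ 2 - β / cosh r ^ 2)
    (hgd : ∀ᶠ r in 𝓝[>] 0, HasDerivAt g (g' r) r)
    (hgd' : ∀ᶠ r in 𝓝[>] 0, HasDerivAt g' (g'' r) r)
    (hode : ∀ᶠ r in 𝓝[>] 0, g'' r + H r * g' r + (lam - Λ r) * g r = 0)
    (hglim : Tendsto (fun r => g r / r) (𝓝[>] 0) (𝓝 1)) :
    Tendsto (fun r => weightedWronskian α β g g' r / r ^ (α + 3)) (𝓝[>] 0)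
      (𝓝 (-(2 / 3 * α + 2 * β + lam) / (α + 3))) := by
  set F := fun r => (H r + (lam - Λ r) * r) * sinhCoshWeight α β r * g r
  have hpos : ∀ᶠ r in 𝓝[>] (0 : ℝ), 0 < r := self_mem_nhdsWithin
  have hW : ∀ᶠ r in 𝓝[>] 0, HasDerivAt (weightedWronskian α β g g') (-F r) r := by
    filter_upwards [hpos, hgd, hgd', hode] with r hr h1 h2 h3
    exact hasDerivAt_weightedWronskian_s5 hr (hH r hr) h1 h2 h3
  have hF : Tendsto (fun r => F r / r ^ (α + 2)) (𝓝[>] 0) (𝓝 (2 / 3 * α + 2 * β + lam)) :=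
    tendsto_coeff_mul_sinhCoshWeight_mul_div_rpow hH hΛ hglim
  have hF0 : Tendsto F (𝓝[>] 0) (𝓝 0) := by
    have h := hF.mul (tendsto_rpow_nhdsGT_zero (by linarith : 0 < α + 2))
    rw [mul_zero] at h
    refine h.congr' ?_
    filter_upwards [hpos] with r hr
    exact div_mul_cancel₀ _ (rpow_pos_of_pos hr _).ne'
  have hW0 : Tendsto (weightedWronskian α β g g') (𝓝[>] 0) (𝓝 0) := by
    refine tendsto_zero_of_hasDerivAt_div (P := fun r => r ^ 2 * sinhCoshWeight α β r) (K := 2) ?_ hglim hW hF0.neg ?_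
    · filter_upwards [hpos, hgd] with r hr h
      exact hasDerivAt_div_self_of_weightedWronskian hr h
    · filter_upwards [hpos, eventually_sq_mul_sinhCoshWeight_le hα] with r hr hle
      exact ⟨mul_pos (by positivity) (sinhCoshWeight_pos hr), hle⟩
  refine HasDerivAt.lhopital_zero_nhdsGT hW (g' := fun r => (α + 3) * r ^ (α + 2)) ?_ ?_ hW0
    (tendsto_rpow_nhdsGT_zero (by linarith)) ?_
  · filter_upwards [hpos] with r hr
    refine (hasDerivAt_rpow_const (Or.inl hr.ne')).congr_deriv ?_
    ring_nf
  · filter_upwards [hpos] with r hr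
    exact mul_ne_zero (by linarith : (0 : ℝ) < α + 3).ne' (rpow_pos_of_pos hr _).ne'
  · refine (hF.neg.div_const (α + 3)).congr' ?_
    filter_upwards [hpos] with r hr
    field_simp

theorem tendsto_sub_div_pow_three_of_ode (hα : -1 ≤ α)
    (hH : ∀ r, 0 < r → H r = α * (cosh r / sinh r) + β * tanh r)
    (hΛ : ∀ r, 0 < r → Λ r = α / sinh r ^ 2 - β / cosh r ^ 2)
    (hgd : ∀ᶠ r in 𝓝[>] 0, HasDerivAt g (g' r) r)
    (hgd' : ∀ᶠ r in 𝓝[>] 0, HasDerivAt g' (g'' r) r)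
    (hode : ∀ᶠ r in 𝓝[>] 0, g'' r + H r * g' r + (lam - Λ r) * g r = 0)
    (hglim : Tendsto (fun r => g r / r) (𝓝[>] 0) (𝓝 1)) :
    Tendsto (fun r => (g r - r) / r ^ 3) (𝓝[>] 0)
      (𝓝 (-(2 / 3 * α + 2 * β + lam) / (2 * (α + 3)))) := by
  have hpos : ∀ᶠ r in 𝓝[>] (0 : ℝ), 0 < r := self_mem_nhdsWithin
  have hz : ∀ᶠ r in 𝓝[>] 0, HasDerivAt (fun r => g r / r - 1)
      (weightedWronskian α β g g' r / (r ^ 2 * sinhCoshWeight α β r)) r := by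
    filter_upwards [hpos, hgd] with r hr h
    exact (hasDerivAt_div_self_of_weightedWronskian hr h).sub_const 1
  have hz' : Tendsto (fun r => weightedWronskian α β g g' r / (r ^ 2 * sinhCoshWeight α β r)
      / (2 * r)) (𝓝[>] 0) (𝓝 (-(2 / 3 * α + 2 * β + lam) / (2 * (α + 3)))) := by
    have h := ((tendsto_weightedWronskian_div_rpow hα hH hΛ hgd hgd' hode hglim).mul
      ((tendsto_sinhCoshWeight_div_rpow (α := α) (β := β)).inv₀ one_ne_zero)).div_const 2
    rw [inv_one, mul_one, div_div, mul_comm (α + 3)] at h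
    refine h.congr' ?_
    filter_upwards [hpos] with r hr
    have := (sinhCoshWeight_pos hr (α := α) (β := β)).ne'
    rw [rpow_add hr, rpow_ofNat]
    field_simp
  have hmain := HasDerivAt.lhopital_zero_nhdsGT hz
    (Eventually.of_forall fun r => (hasDerivAt_pow 2 r).congr_deriv (by ring))
    (hpos.mono fun r hr => by positivity) (by simpa using hglim.sub_const 1)
    (tendsto_nhdsWithin_of_tendsto_nhds ((continuous_pow 2).tendsto' 0 0 (by simp))) hz'
  refine hmain.congr' ?_
  filter_upwards [hpos] with r hr
  field_simp

end RadialODE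

theorem stmt_5_general
    (k n : ℕ)
    (H Λ : ℝ → ℝ)
    (hH : ∀ r : ℝ, 0 < r →
      H r = ((k : ℝ) * n - 1) * (Real.cosh r / Real.sinh r) + ((k : ℝ) - 1) * Real.tanh r)
    (hΛ : ∀ r : ℝ, 0 < r →
      Λ r = ((k : ℝ) * n - 1) / Real.sinh r ^ 2 - ((k : ℝ) - 1) / Real.cosh r ^ 2)
    (lam2 ε : ℝ) (hε : 0 < ε)
    (g g' g'' : ℝ → ℝ)
    (hgd : ∀ r ∈ Set.Ioo (0 : ℝ) ε, HasDerivAt g (g' r) r)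
    (hgd' : ∀ r ∈ Set.Ioo (0 : ℝ) ε, HasDerivAt g' (g'' r) r)
    (hgode : ∀ r ∈ Set.Ioo (0 : ℝ) ε, g'' r + H r * g' r + (lam2 - Λ r) * g r = 0)
    (hglim : Filter.Tendsto (fun r => g r / r) (nhdsWithin 0 (Set.Ioi 0)) (nhds 1)) :
    Filter.Tendsto (fun r => (g r - r) / r ^ 3) (nhdsWithin 0 (Set.Ioi 0))
      (nhds (-(((2 / 3) * ((k : ℝ) * n) + 2 * k - 8 / 3 + lam2) / (2 * ((k : ℝ) * n) + 4)))) := by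
  have hkn : (-1 : ℝ) ≤ k * n - 1 := by linarith [(by positivity : (0 : ℝ) ≤ k * n)]
  have hIoo := Ioo_mem_nhdsGT hε
  convert tendsto_sub_div_pow_three_of_ode hkn hH hΛ (eventually_of_mem hIoo hgd)
    (eventually_of_mem hIoo hgd') (eventually_of_mem hIoo hgode) hglim using 2
  ring

/-- Asymptotic expansion at r = 0 of a solution of
g″ + H·g′ + (λ₂ − Λ)·g = 0 with g(r)/r → 1 as r → 0⁺:
(g(r) − r)/r³ → −((2/3)kn + 2k − 8/3 + λ₂)/(2kn + 4). -/
theorem stmt_5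
    (k n : ℕ) (hk : k = 2 ∨ k = 4 ∨ k = 8) (hn : 2 ≤ n) (hk8 : k = 8 → n = 2)
    (H Λ : ℝ → ℝ)
    (hH : ∀ r : ℝ, 0 < r →
      H r = ((k : ℝ) * n - 1) * (Real.cosh r / Real.sinh r) + ((k : ℝ) - 1) * Real.tanh r)
    (hΛ : ∀ r : ℝ, 0 < r →
      Λ r = ((k : ℝ) * n - 1) / Real.sinh r ^ 2 - ((k : ℝ) - 1) / Real.cosh r ^ 2)
    (lam2 ε : ℝ) (hε : 0 < ε)
    (g g' g'' : ℝ → ℝ)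
    (hgd : ∀ r ∈ Set.Ioo (0 : ℝ) ε, HasDerivAt g (g' r) r)
    (hgd' : ∀ r ∈ Set.Ioo (0 : ℝ) ε, HasDerivAt g' (g'' r) r)
    (hgc : ContinuousOn g'' (Set.Ioo 0 ε))
    (hgode : ∀ r ∈ Set.Ioo (0 : ℝ) ε, g'' r + H r * g' r + (lam2 - Λ r) * g r = 0)
    (hglim : Filter.Tendsto (fun r => g r / r) (nhdsWithin 0 (Set.Ioi 0)) (nhds 1)) :
    Filter.Tendsto (fun r => (g r - r) / r ^ 3) (nhdsWithin 0 (Set.Ioi 0))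
      (nhds (-(((2 / 3) * ((k : ℝ) * n) + 2 * k - 8 / 3 + lam2) / (2 * ((k : ℝ) * n) + 4)))) :=
  stmt_5_general k n H Λ hH hΛ lam2 ε hε g g' g'' hgd hgd' hgode hglim
end

section
/- The function r ↦ Z(r,1) is strictly increasing on (0,∞). -/
/-!
Write `Λ = a / sinh² − b / cosh²` and `H = a coth + b tanh` with `a = kn − 1 ≥ 2b + 1`, `b = k − 1`.
At `y = 1` the square completes: `S + H = (Λ + c) r` with `c = λ₁ − λ₂ < 0`, so up to a constant
`Z(r,1) = 2Λ + rΛ' + ((Λ + c) r)² / 2 − H² / 2`. Since `H' = −Λ`, its derivative is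
`q(r) + c r (rΛ' + 2Λ) + c² r`, where `q(x) = (3Λ' + HΛ) + (Λ'' + Λ²) x + ΛΛ' x²` with `Λ`, `H` and
their derivatives evaluated at `r`. The middle term is nonnegative because `r²Λ` is nonincreasing
(a consequence of `tanh r ≤ r`). As `ΛΛ' < 0`, `q` is concave, so it suffices that `q > 0` at the
ends of `[3 sinh r / (2 + cosh r), sinh r (2 + cosh r) / (1 + 2 cosh r)]`, an interval containing
`r` by two elementary inequalities; at both ends, clearing denominators leaves a polynomial in
`cosh r − 1`, `a − 2b − 1` and `b` with nonnegative coefficients.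
-/

/-- H(r) = (kn−1)·coth(r) + (k−1)·tanh(r). -/
noncomputable def Hfun (k n : ℕ) (r : ℝ) : ℝ :=
  ((k : ℝ) * n - 1) * (Real.cosh r / Real.sinh r) + ((k : ℝ) - 1) * Real.tanh r

/-- Λ(r) = (kn−1)/sinh²(r) − (k−1)/cosh²(r). -/
noncomputable def Lfun (k n : ℕ) (r : ℝ) : ℝ :=
  ((k : ℝ) * n - 1) / Real.sinh r ^ 2 - ((k : ℝ) - 1) / Real.cosh r ^ 2

/-- S(r,y) = y(1−y)/r − H(r)·y + Λ(r)·r + (λ₁−λ₂)·r. -/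
noncomputable def Sfun (k n : ℕ) (lam1 lam2 : ℝ) (r y : ℝ) : ℝ :=
  y * (1 - y) / r - Hfun k n r * y + Lfun k n r * r + (lam1 - lam2) * r

/-- Z(r,y) = (y²−y)/r² + Λ(r)·(y+1) + Λ′(r)·r + 2λ₁·y − (λ₂−λ₁)
      + S(r,y)²/(2y) + H(r)·S(r,y). -/
noncomputable def Zfun (k n : ℕ) (lam1 lam2 : ℝ) (r y : ℝ) : ℝ :=
  (y ^ 2 - y) / r ^ 2 + Lfun k n r * (y + 1) + deriv (Lfun k n) r * r + 2 * lam1 * y -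
    (lam2 - lam1) + (Sfun k n lam1 lam2 r y) ^ 2 / (2 * y) +
    Hfun k n r * Sfun k n lam1 lam2 r y

open Real Set

lemma nonneg_of_hasDerivAt_nonneg {f f' : ℝ → ℝ} (hf : ∀ x, HasDerivAt f (f' x) x)
    (h0 : f 0 = 0) (hf' : ∀ x, 0 < x → 0 ≤ f' x) {x : ℝ} (hx : 0 ≤ x) : 0 ≤ f x := by
  have hmono : MonotoneOn f (Ici 0) :=
    monotoneOn_of_hasDerivWithinAt_nonneg (convex_Ici 0)
      (fun y _ ↦ (hf y).continuousAt.continuousWithinAt) (fun y _ ↦ (hf y).hasDerivWithinAt)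
      (fun y hy ↦ hf' y (by simpa using hy))
  simpa [h0] using hmono self_mem_Ici hx hx

namespace Real

lemma sinh_le_mul_cosh {x : ℝ} (hx : 0 ≤ x) : sinh x ≤ x * cosh x := by
  have := nonneg_of_hasDerivAt_nonneg (f := fun y ↦ y * cosh y - sinh y)
    (fun y ↦ ((hasDerivAt_id' y).mul (hasDerivAt_cosh y)).sub (hasDerivAt_sinh y)
      |>.congr_deriv (by ring))
    (by simp) (fun y hy ↦ mul_nonneg hy.le (sinh_nonneg_iff.2 hy.le)) hx
  simpa using this

lemma three_mul_sinh_le {x : ℝ} (hx : 0 ≤ x) : 3 * sinh x ≤ x * (2 + cosh x) := by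
  have hderiv : ∀ y, 0 < y → 0 ≤ y * sinh y - 2 * (cosh y - 1) := fun y hy ↦
    nonneg_of_hasDerivAt_nonneg (f := fun y ↦ y * sinh y - 2 * (cosh y - 1))
      (fun z ↦ ((hasDerivAt_id' z).mul (hasDerivAt_sinh z)).sub
        (((hasDerivAt_cosh z).sub_const 1).const_mul 2) |>.congr_deriv (by ring))
      (by simp) (fun z hz ↦ sub_nonneg.2 (sinh_le_mul_cosh hz.le)) hy.le
  have := nonneg_of_hasDerivAt_nonneg (f := fun y ↦ y * (2 + cosh y) - 3 * sinh y)
    (fun y ↦ ((hasDerivAt_id' y).mul ((hasDerivAt_cosh y).const_add 2)).sub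
      ((hasDerivAt_sinh y).const_mul 3) |>.congr_deriv (by ring))
    (by simp) hderiv hx
  simpa using this

lemma mul_one_add_two_cosh_le {x : ℝ} (hx : 0 ≤ x) :
    x * (1 + 2 * cosh x) ≤ sinh x * (2 + cosh x) := by
  have := nonneg_of_hasDerivAt_nonneg (f := fun y ↦ sinh y * (2 + cosh y) - y * (1 + 2 * cosh y))
    (f' := fun y ↦ 2 * sinh y * (sinh y - y))
    (fun y ↦ ((hasDerivAt_sinh y).mul ((hasDerivAt_cosh y).const_add 2)).sub
        ((hasDerivAt_id' y).mul (((hasDerivAt_cosh y).const_mul 2).const_add 1))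
      |>.congr_deriv (by linear_combination cosh_sq y))
    (by simp)
    (fun y hy ↦ mul_nonneg (mul_nonneg zero_le_two (sinh_nonneg_iff.2 hy.le))
      (sub_nonneg.2 (self_le_sinh_iff.2 hy.le))) hx
  simpa using this

end Real

namespace KHyperbolic

/-! `lam a b` and `meanCurv a b` are `Λ` and `H`, with `a = kn − 1` and `b = k − 1`. -/

noncomputable def lam (a b r : ℝ) : ℝ := a / sinh r ^ 2 - b / cosh r ^ 2

noncomputable def lamDeriv (a b r : ℝ) : ℝ :=
  2 * (b * sinh r ^ 4 - a * cosh r ^ 4) / (sinh r ^ 3 * cosh r ^ 3)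

noncomputable def lamDeriv2 (a b r : ℝ) : ℝ :=
  2 * (a * (3 * cosh r ^ 2 - sinh r ^ 2) * cosh r ^ 4 +
    b * (cosh r ^ 2 - 3 * sinh r ^ 2) * sinh r ^ 4) / (sinh r ^ 4 * cosh r ^ 4)

noncomputable def meanCurv (a b r : ℝ) : ℝ := a * (cosh r / sinh r) + b * tanh r

noncomputable def zCore (a b c r : ℝ) : ℝ :=
  2 * lam a b r + lamDeriv a b r * r + ((lam a b r + c) * r) ^ 2 / 2 - meanCurv a b r ^ 2 / 2

/-- The quadratic `q`: the `c`-free part of `deriv (zCore a b c) r`, with the explicit factors `r`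
freed to a variable `x`. -/
noncomputable def derivQuad (a b r x : ℝ) : ℝ :=
  3 * lamDeriv a b r + meanCurv a b r * lam a b r + (lamDeriv2 a b r + lam a b r ^ 2) * x +
    lam a b r * lamDeriv a b r * x ^ 2

variable {a b c r : ℝ}

lemma hasDerivAt_lam (hr : r ≠ 0) : HasDerivAt (lam a b) (lamDeriv a b r) r := by
  have hs : sinh r ≠ 0 := sinh_ne_zero.2 hr
  have hc : cosh r ≠ 0 := (cosh_pos r).ne'
  refine ((hasDerivAt_const r a).div ((hasDerivAt_sinh r).pow 2) (pow_ne_zero 2 hs)).sub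
    ((hasDerivAt_const r b).div ((hasDerivAt_cosh r).pow 2) (pow_ne_zero 2 hc))
    |>.congr_deriv ?_
  simp only [Pi.pow_apply, lamDeriv]
  field_simp
  ring

lemma hasDerivAt_lamDeriv (hr : r ≠ 0) : HasDerivAt (lamDeriv a b) (lamDeriv2 a b r) r := by
  have hs : sinh r ≠ 0 := sinh_ne_zero.2 hr
  have hc : cosh r ≠ 0 := (cosh_pos r).ne'
  refine ((((hasDerivAt_sinh r).pow 4).const_mul b).sub
    (((hasDerivAt_cosh r).pow 4).const_mul a)).const_mul 2 |>.div
    (((hasDerivAt_sinh r).pow 3).mul ((hasDerivAt_cosh r).pow 3))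
    (by simp only [Pi.mul_apply, Pi.pow_apply]; positivity)
    |>.congr_deriv ?_
  simp only [Pi.mul_apply, Pi.pow_apply, Pi.sub_apply, lamDeriv2]
  field_simp
  ring

lemma hasDerivAt_meanCurv (hr : r ≠ 0) : HasDerivAt (meanCurv a b) (-lam a b r) r := by
  have hs : sinh r ≠ 0 := sinh_ne_zero.2 hr
  have hc : cosh r ≠ 0 := (cosh_pos r).ne'
  have hfun : meanCurv a b = fun x ↦ a * (cosh x / sinh x) + b * (sinh x / cosh x) := by
    ext x
    rw [meanCurv, tanh_eq_sinh_div_cosh]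
  rw [hfun]
  refine ((((hasDerivAt_cosh r).div (hasDerivAt_sinh r) hs).const_mul a).add
    (((hasDerivAt_sinh r).div (hasDerivAt_cosh r) hc).const_mul b)) |>.congr_deriv ?_
  rw [lam]
  field_simp
  linear_combination (b * sinh r ^ 2 - a * cosh r ^ 2) * cosh_sq r

lemma hasDerivAt_zCore (hr : r ≠ 0) :
    HasDerivAt (zCore a b c)
      (derivQuad a b r r + c * r * (r * lamDeriv a b r + 2 * lam a b r) + c ^ 2 * r) r := by
  have hL := hasDerivAt_lam (a := a) (b := b) hr
  have hL' := hasDerivAt_lamDeriv (a := a) (b := b) hr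
  have hH := hasDerivAt_meanCurv (a := a) (b := b) hr
  refine (((hL.const_mul 2).add (hL'.mul (hasDerivAt_id' r))).add
    ((((hL.add_const c).mul (hasDerivAt_id' r)).pow 2).div_const 2)).sub
    ((hH.pow 2).div_const 2) |>.congr_deriv ?_
  simp only [Pi.mul_apply, derivQuad]
  ring

lemma lam_pos (hb : 0 ≤ b) (hab : 2 * b + 1 ≤ a) (hr : 0 < r) : 0 < lam a b r := by
  have hs : 0 < sinh r := sinh_pos_iff.2 hr
  have hsc : sinh r ^ 2 < cosh r ^ 2 := by rw [cosh_sq]; linarith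
  rw [lam, sub_pos]
  calc b / cosh r ^ 2 ≤ a / cosh r ^ 2 := by gcongr; linarith
    _ < a / sinh r ^ 2 := by gcongr; linarith

lemma mul_sinh_pow_four_lt (hb : 0 ≤ b) (hab : 2 * b + 1 ≤ a) (hr : 0 < r) :
    b * sinh r ^ 4 < a * cosh r ^ 4 := by
  have hs : 0 < sinh r := sinh_pos_iff.2 hr
  calc b * sinh r ^ 4 ≤ b * cosh r ^ 4 := by gcongr; exact (sinh_lt_cosh r).le
    _ < a * cosh r ^ 4 := by gcongr; linarith

lemma lamDeriv_neg (hb : 0 ≤ b) (hab : 2 * b + 1 ≤ a) (hr : 0 < r) : lamDeriv a b r < 0 := by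
  have hs : 0 < sinh r := sinh_pos_iff.2 hr
  have hc : 0 < cosh r := cosh_pos r
  exact div_neg_of_neg_of_pos (by linarith [mul_sinh_pow_four_lt hb hab hr]) (by positivity)

lemma mul_lamDeriv_add_two_mul_lam_nonpos (hb : 0 ≤ b) (hab : 2 * b + 1 ≤ a) (hr : 0 < r) :
    r * lamDeriv a b r + 2 * lam a b r ≤ 0 := by
  have hs : 0 < sinh r := sinh_pos_iff.2 hr
  have hc : 0 < cosh r := cosh_pos r
  have hP := sub_pos.2 (mul_sinh_pow_four_lt hb hab hr)
  have key : sinh r * cosh r * (a * cosh r ^ 2 - b * sinh r ^ 2) ≤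
      r * (a * cosh r ^ 4 - b * sinh r ^ 4) := by
    refine le_of_mul_le_mul_left ?_ hc
    calc cosh r * (sinh r * cosh r * (a * cosh r ^ 2 - b * sinh r ^ 2))
        = (a * cosh r ^ 4 - b * sinh r ^ 4) * sinh r - b * sinh r ^ 3 := by
          linear_combination (-b * sinh r ^ 3) * cosh_sq r
      _ ≤ (a * cosh r ^ 4 - b * sinh r ^ 4) * (r * cosh r) := by
          nlinarith [mul_le_mul_of_nonneg_left (sinh_le_mul_cosh hr.le) hP.le, pow_pos hs 3]
      _ = cosh r * (r * (a * cosh r ^ 4 - b * sinh r ^ 4)) := by ring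
  have hform : r * lamDeriv a b r + 2 * lam a b r = 2 * (sinh r * cosh r *
      (a * cosh r ^ 2 - b * sinh r ^ 2) - r * (a * cosh r ^ 4 - b * sinh r ^ 4)) /
      (sinh r ^ 3 * cosh r ^ 3) := by
    rw [lamDeriv, lam]
    field_simp
    ring
  rw [hform]
  exact div_nonpos_of_nonpos_of_nonneg (by linarith) (by positivity)

lemma quadratic_pos_of_mem_Icc {A B D x₁ x₂ x : ℝ} (hD : D ≤ 0) (hx : x ∈ Icc x₁ x₂)
    (h₁ : 0 < A + B * x₁ + D * x₁ ^ 2) (h₂ : 0 < A + B * x₂ + D * x₂ ^ 2) :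
    0 < A + B * x + D * x ^ 2 := by
  obtain ⟨hx₁, hx₂⟩ := hx
  rcases hx₁.eq_or_lt with rfl | hx₁
  · exact h₁
  have key : (x₂ - x₁) * (A + B * x + D * x ^ 2) =
      (x₂ - x) * (A + B * x₁ + D * x₁ ^ 2) + (x - x₁) * (A + B * x₂ + D * x₂ ^ 2) +
        -D * ((x - x₁) * (x₂ - x) * (x₂ - x₁)) := by ring
  refine pos_of_mul_pos_right ?_ (sub_nonneg.2 (hx₁.le.trans hx₂))
  rw [key]
  have hx₂' : 0 ≤ x₂ - x := sub_nonneg.2 hx₂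
  have hx₁' : 0 < x - x₁ := sub_pos.2 hx₁
  have := mul_nonneg hx₂' h₁.le
  have := mul_pos hx₁' h₂
  have := mul_nonneg (neg_nonneg.2 hD)
    (mul_nonneg (mul_nonneg hx₁'.le hx₂') (by linarith : 0 ≤ x₂ - x₁))
  linarith

lemma derivQuad_pos_at_ends (hb : 0 ≤ b) (hab : 2 * b + 1 ≤ a) (hr : 0 < r) :
    0 < derivQuad a b r (3 * sinh r / (2 + cosh r)) ∧
      0 < derivQuad a b r (sinh r * (2 + cosh r) / (1 + 2 * cosh r)) := by
  have hs : 0 < sinh r := sinh_pos_iff.2 hr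
  have hc : 0 < cosh r := cosh_pos r
  obtain ⟨v, hv, hcosh⟩ : ∃ v, 0 < v ∧ cosh r = 1 + v :=
    ⟨cosh r - 1, by linarith [one_lt_cosh.2 hr.ne'], by ring⟩
  have hsinh : sinh r ^ 2 = v * (2 + v) := by rw [sinh_sq, hcosh]; ring
  obtain ⟨m, hm, rfl⟩ : ∃ m, 0 ≤ m ∧ a = 2 * b + 1 + m := ⟨a - 2 * b - 1, by linarith, by ring⟩
  constructor <;>
  · rw [derivQuad, lam, lamDeriv, lamDeriv2, meanCurv, tanh_eq_sinh_div_cosh]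
    field_simp
    rw [show sinh r ^ 4 = (sinh r ^ 2) ^ 2 by ring, hsinh, hcosh]
    ring_nf
    positivity

lemma derivQuad_self_pos (hb : 0 ≤ b) (hab : 2 * b + 1 ≤ a) (hr : 0 < r) :
    0 < derivQuad a b r r := by
  have hlower : 3 * sinh r / (2 + cosh r) ≤ r :=
    (div_le_iff₀ (by positivity)).2 (by linarith [three_mul_sinh_le hr.le])
  have hupper : r ≤ sinh r * (2 + cosh r) / (1 + 2 * cosh r) :=
    (le_div_iff₀ (by positivity)).2 (mul_one_add_two_cosh_le hr.le)
  have hconcave : lam a b r * lamDeriv a b r ≤ 0 :=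
    mul_nonpos_of_nonneg_of_nonpos (lam_pos hb hab hr).le (lamDeriv_neg hb hab hr).le
  obtain ⟨h₁, h₂⟩ := derivQuad_pos_at_ends hb hab hr
  unfold derivQuad at *
  exact quadratic_pos_of_mem_Icc hconcave ⟨hlower, hupper⟩ h₁ h₂

lemma strictMonoOn_zCore (hb : 0 ≤ b) (hab : 2 * b + 1 ≤ a) (hc : c ≤ 0) :
    StrictMonoOn (zCore a b c) (Ioi 0) := by
  refine strictMonoOn_of_hasDerivWithinAt_pos (convex_Ioi 0)
    (f' := fun r ↦ derivQuad a b r r + c * r * (r * lamDeriv a b r + 2 * lam a b r) + c ^ 2 * r)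
    (fun r hr ↦ (hasDerivAt_zCore (ne_of_gt hr)).continuousAt.continuousWithinAt) ?_ ?_ <;>
    rw [interior_Ioi]
  · exact fun r hr ↦ (hasDerivAt_zCore (ne_of_gt hr)).hasDerivWithinAt
  intro r (hr : 0 < r)
  have hlin : 0 ≤ c * r * (r * lamDeriv a b r + 2 * lam a b r) :=
    mul_nonneg_of_nonpos_of_nonpos (mul_nonpos_of_nonpos_of_nonneg hc hr.le)
      (mul_lamDeriv_add_two_mul_lam_nonpos hb hab hr)
  have hsq : 0 ≤ c ^ 2 * r := by positivity
  linarith [derivQuad_self_pos hb hab hr]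

end KHyperbolic

open KHyperbolic in
lemma Zfun_one_eq_zCore (k n : ℕ) (lam1 lam2 : ℝ) {r : ℝ} (hr : 0 < r) :
    Zfun k n lam1 lam2 r 1 = zCore (k * n - 1) (k - 1) (lam1 - lam2) r + (3 * lam1 - lam2) := by
  have hderiv : deriv (Lfun k n) r = lamDeriv (k * n - 1) (k - 1) r :=
    (hasDerivAt_lam hr.ne').deriv
  rw [Zfun, Sfun, hderiv, zCore]
  change _ = 2 * Lfun k n r + _ * r + ((Lfun k n r + _) * r) ^ 2 / 2 - Hfun k n r ^ 2 / 2 + _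
  field_simp
  ring

theorem stmt_11_general
    (k n : ℕ) (hk : k = 2 ∨ k = 4 ∨ k = 8) (hn : 2 ≤ n)
    (lam1 lam2 : ℝ) (hlam : lam1 < lam2) :
    StrictMonoOn (fun r => Zfun k n lam1 lam2 r 1) (Set.Ioi (0 : ℝ)) := by
  have hk1 : (1 : ℝ) ≤ k := by rcases hk with rfl | rfl | rfl <;> norm_num
  have hn2 : (2 : ℝ) ≤ n := by exact_mod_cast hn
  have hmono := KHyperbolic.strictMonoOn_zCore (a := k * n - 1) (b := k - 1) (c := lam1 - lam2)
    (by linarith) (by nlinarith) (by linarith)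
  exact (hmono.add_const (3 * lam1 - lam2)).congr fun r hr ↦ (Zfun_one_eq_zCore k n lam1 lam2 hr).symm

/-- The function r ↦ Z(r,1) is strictly increasing on (0,∞). -/
theorem stmt_11
    (k n : ℕ) (hk : k = 2 ∨ k = 4 ∨ k = 8) (hn : 2 ≤ n) (hk8 : k = 8 → n = 2)
    (lam1 lam2 : ℝ) (hlam : lam1 < lam2) :
    StrictMonoOn (fun r => Zfun k n lam1 lam2 r 1) (Set.Ioi (0 : ℝ)) :=
  stmt_11_general k n hk hn lam1 lam2 hlam
end

section
/- For every real r > 0, (4r² − 3)·cosh(r) + 3(1 + 4r²)·cosh(3r) + 2r·sinh(r) − 10r·sinh(3r) > 0. -/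
/-!
Write `c = cosh r`, `s = sinh r`. Expanding `cosh 3r` and `sinh 3r` and using `c² = 1 + s²`, the
expression equals `c (12 (s² - r²) + 8 r² s²) + 4 r (7 + 10 s²) (r c - s)`. Both summands are
positive for `r > 0`, because `r < sinh r` and `tanh r < r`.
-/

open Real

lemma Real.sinh_lt_mul_cosh {x : ℝ} (hx : 0 < x) : sinh x < x * cosh x := by
  have hmono : StrictMonoOn (fun x => x * cosh x - sinh x) (Set.Ici 0) := by
    apply strictMonoOn_of_deriv_pos (convex_Ici 0) (by fun_prop)
    intro y hy
    rw [interior_Ici, Set.mem_Ioi] at hy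
    have hderiv : HasDerivAt (fun x => x * cosh x - sinh x) (y * sinh y) y :=
      (((hasDerivAt_id' y).mul (hasDerivAt_cosh y)).sub (hasDerivAt_sinh y)).congr_deriv
        (by ring)
    rw [hderiv.deriv]
    exact mul_pos hy (sinh_pos_iff.mpr hy)
  simpa using hmono Set.self_mem_Ici (Set.mem_Ici.mpr hx.le) hx

lemma stmt_16_expr_eq (r : ℝ) :
    (4 * r ^ 2 - 3) * cosh r + 3 * (1 + 4 * r ^ 2) * cosh (3 * r) +
        2 * r * sinh r - 10 * r * sinh (3 * r) =
      cosh r * (12 * (sinh r ^ 2 - r ^ 2) + 8 * r ^ 2 * sinh r ^ 2) +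
        4 * r * (7 + 10 * sinh r ^ 2) * (r * cosh r - sinh r) := by
  rw [cosh_three_mul, sinh_three_mul]
  linear_combination (12 + 48 * r ^ 2) * cosh r * cosh_sq r

/-- For every real r > 0,
(4r² − 3)·cosh(r) + 3(1 + 4r²)·cosh(3r) + 2r·sinh(r) − 10r·sinh(3r) > 0. -/
theorem stmt_16 (r : ℝ) (hr : 0 < r) :
    0 < (4 * r ^ 2 - 3) * Real.cosh r + 3 * (1 + 4 * r ^ 2) * Real.cosh (3 * r) +
      2 * r * Real.sinh r - 10 * r * Real.sinh (3 * r) := by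
  rw [stmt_16_expr_eq]
  have hsinh : r < sinh r := self_lt_sinh_iff.mpr hr
  have hsq : r ^ 2 < sinh r ^ 2 := pow_lt_pow_left₀ hsinh hr.le two_ne_zero
  have htanh : 0 < r * cosh r - sinh r := sub_pos.mpr (sinh_lt_mul_cosh hr)
  have : 0 < 12 * (sinh r ^ 2 - r ^ 2) + 8 * r ^ 2 * sinh r ^ 2 := by
    have := sub_pos.mpr hsq
    positivity
  positivity
end

section
/- The function f(r) = 9·(r²/sinh⁴(r) − coth²(r)) + (r²/cosh⁴(r) − tanh²(r)) is strictly increasing on (0,∞). -/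
/-!
Writing `s = sinh r`, `c = cosh r`, the derivative is `f'(r) = 2 P(r, r) / (s⁵ c⁵)`, where
`t ↦ P(r, t)` is a concave quadratic, positive at `t = 0`. It therefore suffices to find
`R ≥ r` with `P(r, R) > 0`. The Padé-type bound `r ≤ s (5c² + 6c + 49) / (9c² + 18c + 33)`
provides it: at this `R`, `P(r, R)` is a positive multiple of a polynomial in `c - 1` with
positive coefficients.
-/

open Real

theorem quadratic_pos_of_pos_at_endpoints {a b d R r : ℝ} (hb : 0 ≤ b) (hd : 0 < d)
    (hR : 0 < a * R - b * R ^ 2 + d) (hr : 0 ≤ r) (hrR : r ≤ R) :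
    0 < a * r - b * r ^ 2 + d := by
  obtain rfl | hr := hr.eq_or_lt
  · simpa using hd
  have hR0 : 0 < R := hr.trans_le hrR
  have hRr : 0 ≤ R - r := sub_nonneg.mpr hrR
  have interpolation : R * (a * r - b * r ^ 2 + d) =
      (R - r) * d + r * (a * R - b * R ^ 2 + d) + b * r * R * (R - r) := by ring
  refine pos_of_mul_pos_right (a := R) ?_ hR0.le
  rw [interpolation]
  exact add_pos_of_pos_of_nonneg (add_pos_of_nonneg_of_pos (mul_nonneg hRr hd.le) (mul_pos hr hR))
    (mul_nonneg (by positivity) hRr)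

/- A Padé-type approximant: `x / sinh x ≤ sinhBoundNum (cosh x) / sinhBoundDen (cosh x)`,
with error `O(x⁶)` at `0`. -/
def sinhBoundNum (c : ℝ) : ℝ := 5 * c ^ 2 + 6 * c + 49

def sinhBoundDen (c : ℝ) : ℝ := 9 * c ^ 2 + 18 * c + 33

theorem sinhBoundDen_pos {c : ℝ} (hc : 0 ≤ c) : 0 < sinhBoundDen c := by
  unfold sinhBoundDen; positivity

theorem hasDerivAt_sinhBoundNum (c : ℝ) : HasDerivAt sinhBoundNum (10 * c + 6) c :=
  ((((hasDerivAt_pow 2 c).const_mul 5).add ((hasDerivAt_id' c).const_mul 6)).add_const 49).congr_deriv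
    (by ring)

theorem hasDerivAt_sinhBoundDen (c : ℝ) : HasDerivAt sinhBoundDen (18 * c + 18) c :=
  ((((hasDerivAt_pow 2 c).const_mul 9).add ((hasDerivAt_id' c).const_mul 18)).add_const 33).congr_deriv
    (by ring)

theorem hasDerivAt_sinh_mul_sinhBound_sub_id (x : ℝ) :
    HasDerivAt (fun y => sinh y * sinhBoundNum (cosh y) / sinhBoundDen (cosh y) - y)
      ((684 * (cosh x - 1) ^ 3 + 324 * (cosh x - 1) ^ 4 + 45 * (cosh x - 1) ^ 5) /
        sinhBoundDen (cosh x) ^ 2) x := by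
  have hD := sinhBoundDen_pos (cosh_pos x).le
  have hNum := (hasDerivAt_sinh x).mul ((hasDerivAt_sinhBoundNum _).comp x (hasDerivAt_cosh x))
  have hDen := (hasDerivAt_sinhBoundDen _).comp x (hasDerivAt_cosh x)
  refine ((hNum.div hDen hD.ne').sub (hasDerivAt_id x)).congr_deriv ?_
  simp only [Function.comp_apply, Pi.mul_apply]
  field_simp
  unfold sinhBoundNum sinhBoundDen
  linear_combination (36 * cosh x ^ 2 - 552 * cosh x - 684) * sinh_sq x

theorem self_le_sinh_mul_sinhBound {x : ℝ} (hx : 0 ≤ x) :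
    x ≤ sinh x * sinhBoundNum (cosh x) / sinhBoundDen (cosh x) := by
  have hmono := monotone_of_hasDerivAt_nonneg hasDerivAt_sinh_mul_sinhBound_sub_id fun y => by
    have : 0 ≤ cosh y - 1 := sub_nonneg.mpr (one_le_cosh y)
    positivity
  simpa using hmono hx

theorem sinhBound_defect_pos {c : ℝ} (hc : 1 < c) :
    0 < c * sinhBoundNum c * sinhBoundDen c * (9 * c ^ 4 + (c ^ 2 - 1) ^ 2) -
      2 * sinhBoundNum c ^ 2 * (9 * c ^ 6 + (c ^ 2 - 1) ^ 3) +
      c ^ 2 * sinhBoundDen c ^ 2 * (9 * c ^ 4 - (c ^ 2 - 1) ^ 2) := by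
  obtain ⟨u, hu, rfl⟩ : ∃ u > 0, c = 1 + u := ⟨c - 1, by linarith, by ring⟩
  convert (by positivity : 0 < 23040 * u ^ 2 + 50244 * u ^ 3 + 116616 * u ^ 4 +
    187283 * u ^ 5 + 162515 * u ^ 6 + 78482 * u ^ 7 + 21814 * u ^ 8 + 3322 * u ^ 9 +
    148 * u ^ 10) using 1
  unfold sinhBoundNum sinhBoundDen
  ring

noncomputable def hyperbolicCombination (A B r : ℝ) : ℝ :=
  A * (r ^ 2 / sinh r ^ 4 - (cosh r / sinh r) ^ 2) + B * (r ^ 2 / cosh r ^ 4 - tanh r ^ 2)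

/- The numerator of the derivative of `hyperbolicCombination A B` at `r`, with the explicit
factor `r` (as opposed to the `r` inside `sinh` and `cosh`) replaced by `t`. -/
noncomputable def hyperbolicCombinationNumerator (A B r t : ℝ) : ℝ :=
  sinh r * cosh r * (A * cosh r ^ 4 + B * sinh r ^ 4) * t -
    2 * (A * cosh r ^ 6 + B * sinh r ^ 6) * t ^ 2 +
    sinh r ^ 2 * cosh r ^ 2 * (A * cosh r ^ 4 - B * sinh r ^ 4)

theorem hasDerivAt_hyperbolicCombination (A B : ℝ) {r : ℝ} (hr : r ≠ 0) :
    HasDerivAt (hyperbolicCombination A B)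
      (2 * hyperbolicCombinationNumerator A B r r / (sinh r ^ 5 * cosh r ^ 5)) r := by
  have hs : sinh r ≠ 0 := sinh_ne_zero.mpr hr
  have hc : cosh r ≠ 0 := (cosh_pos r).ne'
  have h1 := (hasDerivAt_pow 2 r).div ((hasDerivAt_sinh r).pow 4) (pow_ne_zero 4 hs)
  have h2 := ((hasDerivAt_cosh r).div (hasDerivAt_sinh r) hs).pow 2
  have h3 := (hasDerivAt_pow 2 r).div ((hasDerivAt_cosh r).pow 4) (pow_ne_zero 4 hc)
  have h4 := ((hasDerivAt_sinh r).div (hasDerivAt_cosh r) hc).pow 2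
  unfold hyperbolicCombination
  simp only [tanh_eq_sinh_div_cosh]
  refine (((h1.sub h2).const_mul A).add ((h3.sub h4).const_mul B)).congr_deriv ?_
  unfold hyperbolicCombinationNumerator
  push_cast
  simp only [Pi.pow_apply, Pi.div_apply]
  field_simp
  linear_combination (2 * A * cosh r ^ 6 * sinh r ^ 2 -
    2 * B * cosh r ^ 2 * sinh r ^ 6) * cosh_sq_sub_sinh_sq r

theorem sinh_sq_mul_cosh_sq_mul_sub_pos {A B r : ℝ} (hA : 0 < A) (hB : B ≤ A) (hr : r ≠ 0) :
    0 < sinh r ^ 2 * cosh r ^ 2 * (A * cosh r ^ 4 - B * sinh r ^ 4) := by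
  have hs : 0 < sinh r ^ 2 := by positivity [sinh_ne_zero.mpr hr]
  have hc : sinh r ^ 2 < cosh r ^ 2 := by rw [cosh_sq']; linarith
  have hc4 : sinh r ^ 4 < cosh r ^ 4 := by
    simpa only [← pow_mul] using pow_lt_pow_left₀ hc hs.le two_ne_zero
  have hAB : 0 < A * cosh r ^ 4 - B * sinh r ^ 4 := by
    nlinarith [mul_pos hA (sub_pos.mpr hc4),
      mul_nonneg (sub_nonneg.mpr hB) (by positivity : 0 ≤ sinh r ^ 4)]
  exact mul_pos (mul_pos hs (pow_pos (cosh_pos r) 2)) hAB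

theorem hyperbolicCombinationNumerator_sinhBound_pos {r : ℝ} (hr : r ≠ 0) :
    0 < hyperbolicCombinationNumerator 9 1 r
      (sinh r * sinhBoundNum (cosh r) / sinhBoundDen (cosh r)) := by
  have hs : sinh r ≠ 0 := sinh_ne_zero.mpr hr
  have hD := sinhBoundDen_pos (cosh_pos r).le
  have hs4 : sinh r ^ 4 = (cosh r ^ 2 - 1) ^ 2 := by rw [← sinh_sq]; ring
  have hs6 : sinh r ^ 6 = (cosh r ^ 2 - 1) ^ 3 := by rw [← sinh_sq]; ring
  have hfactor : hyperbolicCombinationNumerator 9 1 r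
      (sinh r * sinhBoundNum (cosh r) / sinhBoundDen (cosh r)) =
      sinh r ^ 2 / sinhBoundDen (cosh r) ^ 2 *
        (cosh r * sinhBoundNum (cosh r) * sinhBoundDen (cosh r) *
            (9 * cosh r ^ 4 + (cosh r ^ 2 - 1) ^ 2) -
          2 * sinhBoundNum (cosh r) ^ 2 * (9 * cosh r ^ 6 + (cosh r ^ 2 - 1) ^ 3) +
          cosh r ^ 2 * sinhBoundDen (cosh r) ^ 2 * (9 * cosh r ^ 4 - (cosh r ^ 2 - 1) ^ 2)) := by
    rw [← hs4, ← hs6]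
    unfold hyperbolicCombinationNumerator
    field_simp
  rw [hfactor]
  exact mul_pos (by positivity) (sinhBound_defect_pos (one_lt_cosh.mpr hr))

theorem hyperbolicCombinationNumerator_pos {r : ℝ} (hr : 0 < r) :
    0 < hyperbolicCombinationNumerator 9 1 r r :=
  quadratic_pos_of_pos_at_endpoints (by positivity)
    (sinh_sq_mul_cosh_sq_mul_sub_pos (by norm_num) (by norm_num) hr.ne')
    (hyperbolicCombinationNumerator_sinhBound_pos hr.ne') hr.le (self_le_sinh_mul_sinhBound hr.le)

/-- The function
f(r) = 9·(r²/sinh⁴(r) − coth²(r)) + (r²/cosh⁴(r) − tanh²(r))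
is strictly increasing on (0,∞). -/
theorem stmt_17 :
    StrictMonoOn
      (fun r : ℝ =>
        9 * (r ^ 2 / Real.sinh r ^ 4 - (Real.cosh r / Real.sinh r) ^ 2) +
          (r ^ 2 / Real.cosh r ^ 4 - Real.tanh r ^ 2))
      (Set.Ioi (0 : ℝ)) := by
  have hf : (fun r : ℝ =>
        9 * (r ^ 2 / Real.sinh r ^ 4 - (Real.cosh r / Real.sinh r) ^ 2) +
          (r ^ 2 / Real.cosh r ^ 4 - Real.tanh r ^ 2)) = hyperbolicCombination 9 1 := by
    funext r
    simp only [hyperbolicCombination, one_mul]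
  rw [hf]
  refine strictMonoOn_of_deriv_pos (convex_Ioi 0) (fun r hr =>
    (hasDerivAt_hyperbolicCombination 9 1 hr.ne').continuousAt.continuousWithinAt) ?_
  rw [interior_Ioi]
  intro r hr
  rw [(hasDerivAt_hyperbolicCombination 9 1 hr.ne').deriv]
  have := hyperbolicCombinationNumerator_pos hr
  have := sinh_pos_iff.mpr hr
  have := cosh_pos r
  positivity
end

section
/- For every k ∈ {2,4,8} and every integer n ≥ 2, the function r ↦ r²·((kn−1)/sinh²(r) − (k−1)/cosh²(r)) is strictly decreasing on (0,∞). -/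
/-!
Since `cosh² - sinh² = 1` and `sinh (2r) = 2 sinh r cosh r`,
`r² (A / sinh² r - B / cosh² r) = (A - B) g(r) + B g(2r)` with `g(r) = r² / sinh² r`.
The function `g` is strictly decreasing on `(0, ∞)` because `sinh` is strictly convex on `[0, ∞)`
and vanishes at `0`, so `sinh r / r` is strictly increasing; hence the combination is strictly
decreasing as soon as `0 ≤ B < A`, which holds for `A = kn - 1`, `B = k - 1`.
-/

open Real Set

theorem Real.strictConvexOn_sinh : StrictConvexOn ℝ (Ici 0) sinh :=
  StrictMonoOn.strictConvexOn_of_deriv (convex_Ici 0) continuous_sinh.continuousOn <| by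
    rw [deriv_sinh, interior_Ici]
    exact cosh_strictMonoOn.mono Ioi_subset_Ici_self

theorem Real.strictMonoOn_sinh_div_self : StrictMonoOn (fun x => sinh x / x) (Ioi 0) := by
  intro x hx y hy hxy
  simpa only [sinh_zero, sub_zero] using
    strictConvexOn_sinh.secant_strict_mono self_mem_Ici (mem_Ici.2 (le_of_lt hx))
      (mem_Ici.2 (le_of_lt hy)) (ne_of_gt hx) (ne_of_gt hy) hxy

theorem Real.strictAntiOn_sq_div_sinh_sq : StrictAntiOn (fun x => x ^ 2 / sinh x ^ 2) (Ioi 0) := by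
  intro x hx y hy hxy
  have hx' : 0 < sinh x / x := div_pos (sinh_pos_iff.2 hx) hx
  have h : sinh x / x < sinh y / y := strictMonoOn_sinh_div_self hx hy hxy
  have hy' : 0 < sinh y / y := hx'.trans h
  calc y ^ 2 / sinh y ^ 2 = (sinh y / y)⁻¹ ^ 2 := by rw [inv_div, div_pow]
    _ < (sinh x / x)⁻¹ ^ 2 :=
      pow_lt_pow_left₀ ((inv_lt_inv₀ hy' hx').2 h) (inv_nonneg.2 hy'.le) two_ne_zero
    _ = x ^ 2 / sinh x ^ 2 := by rw [inv_div, div_pow]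

theorem Real.sq_mul_div_sinh_sq_sub_div_cosh_sq (A B : ℝ) {r : ℝ} (hr : r ≠ 0) :
    r ^ 2 * (A / sinh r ^ 2 - B / cosh r ^ 2) =
      (A - B) * (r ^ 2 / sinh r ^ 2) + B * ((2 * r) ^ 2 / sinh (2 * r) ^ 2) := by
  have hs : sinh r ≠ 0 := sinh_ne_zero.2 hr
  have hc : cosh r ≠ 0 := (cosh_pos r).ne'
  rw [sinh_two_mul]
  field_simp
  linear_combination B * cosh_sq_sub_sinh_sq r

theorem Real.strictAntiOn_sq_mul_div_sinh_sq_sub_div_cosh_sq {A B : ℝ} (hB : 0 ≤ B)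
    (hBA : B < A) :
    StrictAntiOn (fun r => r ^ 2 * (A / sinh r ^ 2 - B / cosh r ^ 2)) (Ioi 0) := by
  intro x hx y hy hxy
  have hx2 : (0 : ℝ) < 2 * x := by linarith [mem_Ioi.1 hx]
  have hy2 : (0 : ℝ) < 2 * y := by linarith [mem_Ioi.1 hy]
  simp only [sq_mul_div_sinh_sq_sub_div_cosh_sq A B (ne_of_gt hx),
    sq_mul_div_sinh_sq_sub_div_cosh_sq A B (ne_of_gt hy)]
  exact add_lt_add_of_lt_of_le
    (mul_lt_mul_of_pos_left (strictAntiOn_sq_div_sinh_sq hx hy hxy) (sub_pos.2 hBA))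
    (mul_le_mul_of_nonneg_left (strictAntiOn_sq_div_sinh_sq hx2 hy2 (by linarith)).le hB)

/-- For every k ∈ {2,4,8} and every integer n ≥ 2, the function
r ↦ r²·((kn−1)/sinh²(r) − (k−1)/cosh²(r)) is strictly decreasing on (0,∞). -/
theorem stmt_18 (k n : ℕ) (hk : k = 2 ∨ k = 4 ∨ k = 8) (hn : 2 ≤ n) :
    StrictAntiOn
      (fun r : ℝ =>
        r ^ 2 * (((k : ℝ) * n - 1) / Real.sinh r ^ 2 - ((k : ℝ) - 1) / Real.cosh r ^ 2))
      (Set.Ioi (0 : ℝ)) := by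
  have hk1 : (1 : ℝ) ≤ k := by rcases hk with rfl | rfl | rfl <;> norm_num
  have hn2 : (2 : ℝ) ≤ n := by exact_mod_cast hn
  exact strictAntiOn_sq_mul_div_sinh_sq_sub_div_cosh_sq (by linarith) (by nlinarith)
end
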